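/- arXiv:2506.19176 — 10 statements merged into one kernel-verified Lean document; each statement's English description precedes it below -/
import Mathlib

section
/- Let m be a message profile and a a feasible allocation. Then a is not visibly unfair under m if and only if a_{i_k} ∈ G(S^k(a), m_{i_k}) for every k = 1,…,n. Consequently, a mechanism ψ is visibly fair if and only if it is an m-queue allocation mechanism, i.e., ψ(m)_{i_k} ∈ G(S^k(ψ(m)), m_{i_k}) for every message profile m and every k. -/
attribute [local instance] Classical.propDecidable

section Defs

variable {S T : Type*} {n : ℕ}

/-- A message is an irreflexive and acyclic binary relation on states. -/
def IsMessage (r : S → S → Prop) : Prop :=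
  (∀ s, ¬ r s s) ∧ (∀ s, ¬ Relation.TransGen r s s)

/-- A strict preference: asymmetric, transitive and total (complete) relation. -/
def IsStrictPref (p : S → S → Prop) : Prop :=
  (∀ s s', p s s' → ¬ p s' s) ∧
  (∀ s s' s'', p s s' → p s' s'' → p s s'') ∧
  (∀ s s', s ≠ s' → p s s' ∨ p s' s)

/-- The weak part of a strict preference. -/
def weakPref (p : S → S → Prop) (s s' : S) : Prop := p s s' ∨ s = s'

/-- A message `r` is truthful for a preference `p`. -/
def Truthful (p r : S → S → Prop) : Prop := ∀ s s', r s s' → p s s'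

/-- Two states are comparable under a message. -/
def Cmp (r : S → S → Prop) (s s' : S) : Prop := s = s' ∨ r s s' ∨ r s' s

/-- Feasibility of an allocation with respect to capacities. -/
def Feasible (q : S → ℕ) (a : Fin n → S) : Prop :=
  ∀ s, (Finset.univ.filter fun i => a i = s).card ≤ q s

/-- Visible unfairness of allocation `a` under message profile `m`
(officer `i` has higher priority than `j` iff `i < j`). -/
def VisiblyUnfair (q : S → ℕ) (m : Fin n → S → S → Prop) (a : Fin n → S) : Prop :=
  ∃ i : Fin n,
    (∃ j : Fin n, a i ≠ a j ∧ i < j ∧ m i (a j) (a i)) ∨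
    (∃ s : S, a i ≠ s ∧ (Finset.univ.filter fun j => a j = s).card < q s ∧ m i s (a i))

/-- `G(X, r)`: the set of `r`-maximal (undominated) elements of `X`. -/
def maxSet (r : S → S → Prop) (X : Set S) : Set S :=
  {s | s ∈ X ∧ ∀ s' ∈ X, ¬ r s' s}

/-- `S^k(a)`: states whose capacity is not exhausted by the officers ranked above `k`. -/
def remStates (q : S → ℕ) (a : Fin n → S) (k : Fin n) : Set S :=
  {s | (Finset.univ.filter fun j => j < k ∧ a j = s).card < q s}

/-- A mechanism is visibly fair on message spaces `M`. -/
def VisiblyFair (q : S → ℕ) (M : Fin n → Set (S → S → Prop))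
    (ψ : (Fin n → S → S → Prop) → Fin n → S) : Prop :=
  ∀ m, (∀ i, m i ∈ M i) → ¬ VisiblyUnfair q m (ψ m)

/-- Strategy-proofness. -/
def StrategyProof (M : Fin n → Set (S → S → Prop))
    (ψ : (Fin n → S → S → Prop) → Fin n → S) : Prop :=
  ∀ (i : Fin n) (p : S → S → Prop), IsStrictPref p →
    ∀ m, (∀ j, m j ∈ M j) → Truthful p (m i) →
      ∀ mh ∈ M i, weakPref p (ψ m i) (ψ (Function.update m i mh) i)

/-- Expressiveness. -/
def Expressive (M : Fin n → Set (S → S → Prop))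
    (ψ : (Fin n → S → S → Prop) → Fin n → S) : Prop :=
  ∀ (i : Fin n) (m : Fin n → S → S → Prop), (∀ j, m j ∈ M j) →
    ∀ mh ∈ M i, Cmp (m i) (ψ (Function.update m i mh) i) (ψ m i)

/-- State `s` is available to officer `i` under allocation `a`. -/
def AvailState (q : S → ℕ) (a : Fin n → S) (i : Fin n) (s : S) : Prop :=
  (Finset.univ.filter fun j => a j = s ∧ j < i).card < q s

/-- Availability. -/
def Availability (q : S → ℕ) (M : Fin n → Set (S → S → Prop))
    (ψ : (Fin n → S → S → Prop) → Fin n → S) : Prop :=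
  ∀ (i : Fin n) (m : Fin n → S → S → Prop), (∀ j, m j ∈ M j) →
    ∀ mh ∈ M i, AvailState q (ψ m) i (ψ (Function.update m i mh) i)

/-- Weak availability. -/
def WeakAvailability (q : S → ℕ) (M : Fin n → Set (S → S → Prop))
    (ψ : (Fin n → S → S → Prop) → Fin n → S) : Prop :=
  ∀ (i : Fin n) (p : S → S → Prop), IsStrictPref p →
    ∀ m, (∀ j, m j ∈ M j) → Truthful p (m i) →
      ∀ mh ∈ M i, weakPref p (ψ (Function.update m i mh) i) (ψ m i) →
        AvailState q (ψ m) i (ψ (Function.update m i mh) i)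

/-- Coherence. -/
def Coherent (M : Fin n → Set (S → S → Prop))
    (ψ : (Fin n → S → S → Prop) → Fin n → S) : Prop :=
  ∀ (i : Fin n) (m : Fin n → S → S → Prop), (∀ j, m j ∈ M j) →
    ∀ mh ∈ M i, ψ (Function.update m i mh) i ≠ ψ m i →
      ψ (Function.update m i mh) i ∉
        maxSet (m i) {ψ m i, ψ (Function.update m i mh) i}

/-- Two states lie in a common zone of `Z`. -/
def SameZone (Z : Set (Set S)) (s s' : S) : Prop := ∃ z ∈ Z, s ∈ z ∧ s' ∈ z

/-- A zonal message space with zones `Z`. -/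
def ZonalSpace (Z : Set (Set S)) (M : Set (S → S → Prop)) : Prop :=
  (∀ r ∈ M, ∀ s s', (SameZone Z s s' → Cmp r s s') ∧ (¬ SameZone Z s s' → ¬ Cmp r s s')) ∧
  (∀ R : S → S → Prop, IsStrictPref R →
    ∃ r ∈ M, ∀ z ∈ Z, ∀ s ∈ z, ∀ s' ∈ z, s ≠ s' → (R s s' ↔ r s s'))

/-- Visible efficiency of a feasible allocation `a` under message profile `m`. -/
def VisEff (q : S → ℕ) (m : Fin n → S → S → Prop) (a : Fin n → S) : Prop :=
  ¬ ∃ a' : Fin n → S, a' ≠ a ∧ Feasible q a' ∧ ∀ i, a' i ≠ a i → m i (a' i) (a i)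

/-- Pareto efficiency with respect to a strict preference profile. -/
def ParetoEff (q : S → ℕ) (p : Fin n → S → S → Prop) (a : Fin n → S) : Prop :=
  ¬ ∃ a' : Fin n → S, a' ≠ a ∧ Feasible q a' ∧ ∀ i, a' i ≠ a i → p i (a' i) (a i)

end Defs

/-- a feasible allocation is not visibly unfair under `m` iff each officer
receives an `m`-maximal state among the remaining ones; consequently a mechanism is
visibly fair iff it is an `m`-queue allocation mechanism. -/
theorem stmt0 {S : Type*} [Fintype S] {n : ℕ}
    (q : S → ℕ) (hq : n ≤ ∑ s, q s) :
    (∀ (m : Fin n → S → S → Prop), (∀ i, IsMessage (m i)) →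
      ∀ a : Fin n → S, Feasible q a →
        (¬ VisiblyUnfair q m a ↔ ∀ k : Fin n, a k ∈ maxSet (m k) (remStates q a k))) ∧
    (∀ (M : Fin n → Set (S → S → Prop)), (∀ i, (M i).Nonempty) →
      (∀ i, ∀ r ∈ M i, IsMessage r) →
      ∀ ψ : (Fin n → S → S → Prop) → Fin n → S,
        (∀ m, (∀ i, m i ∈ M i) → Feasible q (ψ m)) →
        (VisiblyFair q M ψ ↔
          ∀ m, (∀ i, m i ∈ M i) →
            ∀ k : Fin n, ψ m k ∈ maxSet (m k) (remStates q (ψ m) k))) := by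
  have key : ∀ (m : Fin n → S → S → Prop), (∀ i, IsMessage (m i)) →
      ∀ a : Fin n → S, Feasible q a →
        (¬ VisiblyUnfair q m a ↔ ∀ k : Fin n, a k ∈ maxSet (m k) (remStates q a k)) := by
    intro m hm a ha
    constructor
    · intro hnf k
      simp only [maxSet, Set.mem_setOf_eq]
      constructor
      · -- a k ∈ remStates q a k
        have hsub : (Finset.univ.filter fun j => j < k ∧ a j = a k) ⊂
            (Finset.univ.filter fun j => a j = a k) := by
          constructor
          · intro x hx
            simp only [Finset.mem_filter] at hx ⊢
            exact ⟨hx.1, hx.2.2⟩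
          · intro hsub
            have hk : k ∈ Finset.univ.filter fun j => a j = a k := by simp
            have := hsub hk
            simp at this
        exact lt_of_lt_of_le (Finset.card_lt_card hsub) (ha (a k))
      · intro s' hs' hms'
        simp only [remStates, Set.mem_setOf_eq] at hs'
        by_cases hne : s' = a k
        · exact (hm k).1 (a k) (hne ▸ hms')
        · by_cases htot : (Finset.univ.filter fun j => a j = s').card < q s'
          · exact hnf ⟨k, Or.inr ⟨s', fun h => hne h.symm, htot, hms'⟩⟩
          · push_neg at htot
            have hlt : (Finset.univ.filter fun j => j < k ∧ a j = s').card <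
                (Finset.univ.filter fun j => a j = s').card := lt_of_lt_of_le hs' htot
            have hex : ∃ j, a j = s' ∧ ¬ j < k := by
              by_contra hcon
              push_neg at hcon
              have hsub2 : (Finset.univ.filter fun j => a j = s') ⊆
                  (Finset.univ.filter fun j => j < k ∧ a j = s') := by
                intro x hx
                simp only [Finset.mem_filter] at hx ⊢
                exact ⟨hx.1, hcon x hx.2, hx.2⟩
              exact absurd (Finset.card_le_card hsub2) (not_le_of_gt hlt)
            obtain ⟨j, hj, hjk⟩ := hex
            have hkj : k < j := by
              refine lt_of_le_of_ne (not_lt.mp hjk) ?_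
              rintro rfl
              exact hne hj.symm
            refine hnf ⟨k, Or.inl ⟨j, fun h => hne (h.trans hj).symm, hkj, ?_⟩⟩
            rw [hj]; exact hms'
    · rintro hmax ⟨i, hcase⟩
      rcases hcase with ⟨j, hne, hij, hmij⟩ | ⟨s, hne, hcard, hms⟩
      · have hj : a j ∈ remStates q a j := ((hmax j).1 : _)
        simp only [remStates, Set.mem_setOf_eq] at hj
        have hmem : a j ∈ remStates q a i := by
          simp only [remStates, Set.mem_setOf_eq]
          refine lt_of_le_of_lt (Finset.card_le_card ?_) hj
          intro x hx
          simp only [Finset.mem_filter] at hx ⊢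
          exact ⟨hx.1, hx.2.1.trans hij, hx.2.2⟩
        exact (hmax i).2 (a j) hmem hmij
      · have hmem : s ∈ remStates q a i := by
          simp only [remStates, Set.mem_setOf_eq]
          refine lt_of_le_of_lt (Finset.card_le_card ?_) hcard
          intro x hx
          simp only [Finset.mem_filter] at hx ⊢
          exact ⟨hx.1, hx.2.2⟩
        exact (hmax i).2 s hmem hms
  refine ⟨key, ?_⟩
  intro M hMne hMmsg ψ hfeas
  constructor
  · intro hvf m hm k
    exact (key m (fun i => hMmsg i _ (hm i)) (ψ m) (hfeas m hm)).mp (hvf m hm) k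
  · intro h m hm
    exact (key m (fun i => hMmsg i _ (hm i)) (ψ m) (hfeas m hm)).mpr (h m hm)
end

section
/- Suppose that for every officer i, every message m_i ∈ M_i is a strict total order on S (any two distinct states are comparable under m_i). Then a mechanism ψ is visibly fair if and only if ψ is the serial dictatorship: for every message profile m and every k = 1,…,n, ψ(m)_{i_k} is the ≻_{m_{i_k}}-greatest element of S^k(ψ(m)). In particular, serial dictatorship is the unique visibly fair mechanism on such message spaces. -/
attribute [local instance] Classical.propDecidable

/-- when every message is a strict total order on `S` (any two distinct
states are comparable), a mechanism is visibly fair iff it is the serial dictatorship: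
each officer receives the message-greatest state among the remaining ones. -/
theorem stmt1 {S : Type*} [Fintype S] {n : ℕ}
    (q : S → ℕ) (hq : n ≤ ∑ s, q s)
    (M : Fin n → Set (S → S → Prop))
    (hMne : ∀ i, (M i).Nonempty)
    (hMmsg : ∀ i, ∀ r ∈ M i, IsMessage r)
    (hMtotal : ∀ i, ∀ r ∈ M i, ∀ s s' : S, s ≠ s' → r s s' ∨ r s' s)
    (ψ : (Fin n → S → S → Prop) → Fin n → S)
    (hfeas : ∀ m, (∀ i, m i ∈ M i) → Feasible q (ψ m)) :
    VisiblyFair q M ψ ↔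
      ∀ m, (∀ i, m i ∈ M i) → ∀ k : Fin n,
        ψ m k ∈ remStates q (ψ m) k ∧
        ∀ s ∈ remStates q (ψ m) k, s ≠ ψ m k → m k (ψ m k) s := by
  have asym : ∀ i : Fin n, ∀ r ∈ M i, ∀ s s' : S, r s s' → ¬ r s' s := by
    intro i r hr s s' h1 h2
    exact (hMmsg i r hr).2 s ((Relation.TransGen.single h1).tail h2)
  constructor
  · intro hVF m hm k
    have hF := hfeas m hm
    constructor
    · simp only [remStates, Set.mem_setOf_eq]
      have hsub : (Finset.univ.filter fun j => j < k ∧ ψ m j = ψ m k) ⊂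
          (Finset.univ.filter fun j => ψ m j = ψ m k) := by
        refine (Finset.ssubset_iff_of_subset ?_).mpr ?_
        · intro j hj; simp only [Finset.mem_filter, Finset.mem_univ, true_and] at hj ⊢
          exact hj.2
        · exact ⟨k, by simp, by simp⟩
      exact lt_of_lt_of_le (Finset.card_lt_card hsub) (hF (ψ m k))
    · intro s hs hne
      simp only [remStates, Set.mem_setOf_eq] at hs
      by_contra hnot
      have hski : m k s (ψ m k) :=
        (hMtotal k (m k) (hm k) (ψ m k) s hne.symm).resolve_left hnot
      apply hVF m hm
      by_cases hcap : (Finset.univ.filter fun j => ψ m j = s).card < q s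
      · exact ⟨k, Or.inr ⟨s, hne.symm, hcap, hski⟩⟩
      · push_neg at hcap
        have hex : ∃ j, ψ m j = s ∧ ¬ j < k := by
          by_contra hno
          push_neg at hno
          have hss : (Finset.univ.filter fun j => ψ m j = s) ⊆
              (Finset.univ.filter fun j => j < k ∧ ψ m j = s) := by
            intro j hj
            simp only [Finset.mem_filter, Finset.mem_univ, true_and] at hj ⊢
            exact ⟨hno j hj, hj⟩
          have hle := Finset.card_le_card hss
          omega
        obtain ⟨j, hj, hjk⟩ := hex
        have hkj : k < j :=
          lt_of_le_of_ne (not_lt.mp hjk) (by rintro rfl; exact hne hj.symm)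
        refine ⟨k, Or.inl ⟨j, ?_, hkj, ?_⟩⟩
        · rw [hj]; exact hne.symm
        · rw [hj]; exact hski
  · intro hSD m hm
    rintro ⟨i, hcase⟩
    rcases hcase with ⟨j, hne, hij, hr⟩ | ⟨s, hne, hcap, hr⟩
    · have hjmem := (hSD m hm j).1
      simp only [remStates, Set.mem_setOf_eq] at hjmem
      have hmem : ψ m j ∈ remStates q (ψ m) i := by
        simp only [remStates, Set.mem_setOf_eq]
        refine lt_of_le_of_lt (Finset.card_le_card ?_) hjmem
        intro l hl
        simp only [Finset.mem_filter, Finset.mem_univ, true_and] at hl ⊢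
        exact ⟨hl.1.trans hij, hl.2⟩
      have hmax := (hSD m hm i).2 (ψ m j) hmem (Ne.symm hne)
      exact asym i (m i) (hm i) _ _ hmax hr
    · have hmem : s ∈ remStates q (ψ m) i := by
        simp only [remStates, Set.mem_setOf_eq]
        refine lt_of_le_of_lt (Finset.card_le_card ?_) hcap
        intro l hl
        simp only [Finset.mem_filter, Finset.mem_univ, true_and] at hl ⊢
        exact hl.2
      have hmax := (hSD m hm i).2 s hmem (Ne.symm hne)
      exact asym i (m i) (hm i) _ _ hmax hr
end

section
/- Suppose every officer's message space is zonal with respect to the same partition Z of S. Then a mechanism ψ is visibly fair if and only if it is a partitioned priority mechanism; equivalently, for every message profile m and every k = 1,…,n, letting z ∈ Z be the zone containing ψ(m)_{i_k}, the state ψ(m)_{i_k} is the ≻_{m_{i_k}}-greatest element of S^k(ψ(m)) ∩ z. -/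
attribute [local instance] Classical.propDecidable

private lemma count_lt {S : Type*} [Fintype S] {n : ℕ} {q : S → ℕ} {a : Fin n → S}
    (hfeas : Feasible q a) {k t : Fin n} {s : S} (hts : a t = s) (htk : ¬ t < k) :
    a t ∈ remStates q a k := by
  subst hts
  show (Finset.univ.filter fun j => j < k ∧ a j = a t).card < q (a t)
  have ht : t ∈ Finset.univ.filter fun j => a j = a t := by simp
  have hsub : (Finset.univ.filter fun j => j < k ∧ a j = a t) ⊆
      (Finset.univ.filter fun j => a j = a t).erase t := by
    intro x hx
    simp only [Finset.mem_filter, Finset.mem_univ, true_and] at hx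
    refine Finset.mem_erase.2 ⟨?_, by simp [hx.2]⟩
    rintro rfl; exact htk hx.1
  have h1 : 0 < (Finset.univ.filter fun j => a j = a t).card := Finset.card_pos.2 ⟨t, ht⟩
  have h2 : ((Finset.univ.filter fun j => a j = a t).erase t).card =
      (Finset.univ.filter fun j => a j = a t).card - 1 := Finset.card_erase_of_mem ht
  have h3 := Finset.card_le_card hsub
  have h4 := hfeas (a t)
  omega

/-- on zonal message spaces, a mechanism is visibly fair iff it is a
partitioned priority mechanism: each officer receives the message-greatest remaining
state within the zone containing her assignment. -/
theorem stmt2 {S : Type*} [Fintype S] {n : ℕ}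
    (q : S → ℕ) (hq : n ≤ ∑ s, q s)
    (Z : Set (Set S)) (hZ : Setoid.IsPartition Z)
    (M : Fin n → Set (S → S → Prop))
    (hMne : ∀ i, (M i).Nonempty)
    (hMmsg : ∀ i, ∀ r ∈ M i, IsMessage r)
    (hMz : ∀ i, ZonalSpace Z (M i))
    (ψ : (Fin n → S → S → Prop) → Fin n → S)
    (hfeas : ∀ m, (∀ i, m i ∈ M i) → Feasible q (ψ m)) :
    VisiblyFair q M ψ ↔
      ∀ m, (∀ i, m i ∈ M i) → ∀ k : Fin n, ∀ z ∈ Z, ψ m k ∈ z →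
        ψ m k ∈ remStates q (ψ m) k ∧
        ∀ s ∈ remStates q (ψ m) k, s ∈ z → s ≠ ψ m k → m k (ψ m k) s := by
  constructor
  · intro hVF m hm k z hz hkz
    have hk : ψ m k ∈ remStates q (ψ m) k :=
      count_lt (hfeas m hm) rfl (lt_irrefl k)
    refine ⟨hk, ?_⟩
    intro s hs hsz hsne
    have hSZ : SameZone Z (ψ m k) s := ⟨z, hz, hkz, hsz⟩
    have hcmp := ((hMz k).1 (m k) (hm k) (ψ m k) s).1 hSZ
    rcases hcmp with h | h | h
    · exact absurd h.symm hsne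
    · exact h
    · exfalso
      apply hVF m hm
      by_cases hfull : (Finset.univ.filter fun j => ψ m j = s).card < q s
      · exact ⟨k, Or.inr ⟨s, fun e => hsne e.symm, hfull, h⟩⟩
      · push_neg at hfull
        have hrem : (Finset.univ.filter fun j => j < k ∧ ψ m j = s).card < q s := hs
        have hex : ∃ t, ψ m t = s ∧ ¬ t < k := by
          by_contra hc
          push_neg at hc
          have hsub : (Finset.univ.filter fun j => ψ m j = s) ⊆
              (Finset.univ.filter fun j => j < k ∧ ψ m j = s) := by
            intro x hx
            simp only [Finset.mem_filter, Finset.mem_univ, true_and] at hx ⊢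
            exact ⟨hc x hx, hx⟩
          have := Finset.card_le_card hsub
          omega
        obtain ⟨t, hts, htk⟩ := hex
        have htne : k ≠ t := by rintro rfl; exact hsne hts.symm
        have hkt : k < t := by
          rcases lt_trichotomy k t with h1 | h1 | h1
          · exact h1
          · exact absurd h1 htne
          · exact absurd h1 htk
        exact ⟨k, Or.inl ⟨t, by rw [hts]; exact Ne.symm hsne, hkt,
          by rw [hts]; exact h⟩⟩
  · intro h m hm
    rintro ⟨i, hcase⟩
    have hfe := hfeas m hm
    rcases hcase with ⟨j, hne, hij, hmj⟩ | ⟨s, hne, hcard, hms⟩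
    · have hcmp : Cmp (m i) (ψ m j) (ψ m i) := Or.inr (Or.inl hmj)
      have hsz : SameZone Z (ψ m j) (ψ m i) := by
        by_contra hns
        exact ((hMz i).1 (m i) (hm i) (ψ m j) (ψ m i)).2 hns hcmp
      obtain ⟨z, hzz, hjz, hiz⟩ := hsz
      have hrem : ψ m j ∈ remStates q (ψ m) i := count_lt hfe rfl (not_lt.2 hij.le)
      have hgt := (h m hm i z hzz hiz).2 (ψ m j) hrem hjz (Ne.symm hne)
      exact (hMmsg i (m i) (hm i)).2 (ψ m i) ((Relation.TransGen.single hgt).tail hmj)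
    · have hcmp : Cmp (m i) s (ψ m i) := Or.inr (Or.inl hms)
      have hsz : SameZone Z s (ψ m i) := by
        by_contra hns
        exact ((hMz i).1 (m i) (hm i) s (ψ m i)).2 hns hcmp
      obtain ⟨z, hzz, hsz', hiz⟩ := hsz
      have hrem : s ∈ remStates q (ψ m) i := by
        have hsub : (Finset.univ.filter fun j => j < i ∧ ψ m j = s) ⊆
            (Finset.univ.filter fun j => ψ m j = s) := by
          intro x hx
          simp only [Finset.mem_filter, Finset.mem_univ, true_and] at hx ⊢
          exact hx.2
        exact lt_of_le_of_lt (Finset.card_le_card hsub) hcard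
      have hgt := (h m hm i z hzz hiz).2 s hrem hsz' (Ne.symm hne)
      exact (hMmsg i (m i) (hm i)).2 (ψ m i) ((Relation.TransGen.single hgt).tail hms)
end

section
/- Suppose every officer's message space is zonal with ranking over the zones, with respect to the same partition Z of S. Then a mechanism ψ is visibly fair if and only if it is a ranked partitioned priority mechanism; equivalently, for every message profile m and every k = 1,…,n, letting a = ψ(m), S^k = S^k(a), and z ∈ Z the zone containing a_{i_k}: (i) a_{i_k} is the ≻_{m_{i_k}}-greatest element of S^k ∩ z, and (ii) either S^k ∩ z ≠ {min(z, m_{i_k})} or there is no zone z' ∈ Z with z' ▷_{m_{i_k}} z and max(z', m_{i_k}) ∈ S^k. -/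
attribute [local instance] Classical.propDecidable

section Ranked

variable {S : Type*}

/-- `x` is the message-greatest state of zone `z`. -/
def ZoneMax (r : S → S → Prop) (z : Set S) (x : S) : Prop :=
  x ∈ z ∧ ∀ s ∈ z, s ≠ x → r x s

/-- `x` is the message-least state of zone `z`. -/
def ZoneMin (r : S → S → Prop) (z : Set S) (x : S) : Prop :=
  x ∈ z ∧ ∀ s ∈ z, s ≠ x → r s x

/-- `rz` is a strict total order on the zones `Z`. -/
def StrictOrderOn (Z : Set (Set S)) (rz : Set S → Set S → Prop) : Prop :=
  (∀ z ∈ Z, ¬ rz z z) ∧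
  (∀ z ∈ Z, ∀ z' ∈ Z, ∀ z'' ∈ Z, rz z z' → rz z' z'' → rz z z'') ∧
  (∀ z ∈ Z, ∀ z' ∈ Z, z ≠ z' → rz z z' ∨ rz z' z)

/-- A message of a zonal message space with zone ranking `rz`: a strict total order on
each zone, and the cross-zone comparisons `max(z) ≻ min(z')` exactly when `rz z z'`. -/
def RankedZonalMsg (Z : Set (Set S)) (rz : Set S → Set S → Prop) (r : S → S → Prop) : Prop :=
  (∀ z ∈ Z, ∀ s ∈ z, ∀ s' ∈ z, s ≠ s' → r s s' ∨ r s' s) ∧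
  (∀ z ∈ Z, ∀ s ∈ z, ∀ s' ∈ z, ∀ s'' ∈ z, r s s' → r s' s'' → r s s'') ∧
  (∀ z ∈ Z, ∀ z' ∈ Z, z ≠ z' → ∀ s ∈ z, ∀ s' ∈ z',
    (r s s' ↔ rz z z' ∧ ZoneMax r z s ∧ ZoneMin r z' s'))

/-- A zonal message space with ranking over the zones. -/
def RankedZonalSpace (Z : Set (Set S)) (M : Set (S → S → Prop)) : Prop :=
  (∀ r ∈ M, ∃ rz, StrictOrderOn Z rz ∧ RankedZonalMsg Z rz r) ∧
  (∀ R : S → S → Prop, IsStrictPref R → ∀ rz, StrictOrderOn Z rz →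
    ∃ r ∈ M, RankedZonalMsg Z rz r ∧
      ∀ z ∈ Z, ∀ s ∈ z, ∀ s' ∈ z, s ≠ s' → (R s s' ↔ r s s'))

end Ranked

section AuxProof

variable {S : Type*} {n : ℕ}

lemma cycFalse {r : S → S → Prop} (h : ∀ s, ¬ Relation.TransGen r s s)
    {s t : S} (h1 : r s t) (h2 : r t s) : False :=
  h s (Relation.TransGen.head h1 (Relation.TransGen.single h2))

lemma lemA [Fintype S] (q : S → ℕ) {a : Fin n → S} (hfeas : Feasible q a) (k : Fin n) :
    a k ∈ remStates q a k := by
  classical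
  have hsub : (Finset.univ.filter fun j => j < k ∧ a j = a k) ⊆
      Finset.univ.filter fun j => a j = a k := by
    intro j hj
    simp only [Finset.mem_filter] at *
    exact ⟨hj.1, hj.2.2⟩
  have hss : (Finset.univ.filter fun j => j < k ∧ a j = a k) ⊂
      Finset.univ.filter fun j => a j = a k := by
    rw [Finset.ssubset_iff_of_subset hsub]
    refine ⟨k, by simp, by simp⟩
  exact lt_of_lt_of_le (Finset.card_lt_card hss) (hfeas (a k))

lemma lemB [Fintype S] (q : S → ℕ) (m : Fin n → S → S → Prop) {a : Fin n → S}
    (hfeas : Feasible q a) {k : Fin n} {s : S}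
    (hs : s ∈ remStates q a k) (hne : s ≠ a k) (hm : m k s (a k)) :
    VisiblyUnfair q m a := by
  classical
  by_cases h : (Finset.univ.filter fun j => a j = s).card < q s
  · exact ⟨k, Or.inr ⟨s, fun e => hne e.symm, h, hm⟩⟩
  · push_neg at h
    have hlt : (Finset.univ.filter fun j => j < k ∧ a j = s).card <
        (Finset.univ.filter fun j => a j = s).card := lt_of_lt_of_le hs h
    have hns : ¬ ((Finset.univ.filter fun j => a j = s) ⊆
        Finset.univ.filter fun j => j < k ∧ a j = s) :=
      fun hsub => absurd (Finset.card_le_card hsub) (not_le.mpr hlt)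
    obtain ⟨j, hj1, hj2⟩ := Finset.not_subset.mp hns
    simp only [Finset.mem_filter, Finset.mem_univ, true_and, not_and] at hj1 hj2
    have hjk : k < j := by
      rcases lt_trichotomy j k with h' | h' | h'
      · exact absurd hj1 (hj2 h')
      · exact absurd hj1 (by rw [h']; exact fun e => hne e.symm)
      · exact h'
    exact ⟨k, Or.inl ⟨j, by rw [hj1]; exact fun e => hne e.symm, hjk, by rw [hj1]; exact hm⟩⟩

lemma lemC [Fintype S] (q : S → ℕ) (m : Fin n → S → S → Prop) {a : Fin n → S}
    (hfeas : Feasible q a) (hu : VisiblyUnfair q m a) :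
    ∃ (k : Fin n) (s : S), s ∈ remStates q a k ∧ s ≠ a k ∧ m k s (a k) := by
  classical
  obtain ⟨i, hcase⟩ := hu
  rcases hcase with ⟨j, hne, hij, hm⟩ | ⟨s, hne, hcard, hm⟩
  · refine ⟨i, a j, ?_, fun e => hne e.symm, hm⟩
    have hsub : (Finset.univ.filter fun j' => j' < i ∧ a j' = a j) ⊆
        Finset.univ.filter fun j' => a j' = a j := by
      intro x hx; simp only [Finset.mem_filter] at *; exact ⟨hx.1, hx.2.2⟩
    have hss : (Finset.univ.filter fun j' => j' < i ∧ a j' = a j) ⊂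
        Finset.univ.filter fun j' => a j' = a j := by
      rw [Finset.ssubset_iff_of_subset hsub]
      exact ⟨j, by simp, by simp [not_lt.mpr (le_of_lt hij)]⟩
    exact lt_of_lt_of_le (Finset.card_lt_card hss) (hfeas (a j))
  · refine ⟨i, s, ?_, fun e => hne e.symm, hm⟩
    have hsub : (Finset.univ.filter fun j => j < i ∧ a j = s) ⊆
        Finset.univ.filter fun j => a j = s := by
      intro x hx; simp only [Finset.mem_filter] at *; exact ⟨hx.1, hx.2.2⟩
    exact lt_of_le_of_lt (Finset.card_le_card hsub) hcard

end AuxProof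

/-- on zonal message spaces with ranking over the zones, a mechanism is
visibly fair iff it is a ranked partitioned priority mechanism. -/
theorem stmt3 {S : Type*} [Fintype S] {n : ℕ}
    (q : S → ℕ) (hq : n ≤ ∑ s, q s)
    (Z : Set (Set S)) (hZ : Setoid.IsPartition Z)
    (M : Fin n → Set (S → S → Prop))
    (hMne : ∀ i, (M i).Nonempty)
    (hMmsg : ∀ i, ∀ r ∈ M i, IsMessage r)
    (hMz : ∀ i, RankedZonalSpace Z (M i))
    (ψ : (Fin n → S → S → Prop) → Fin n → S)
    (hfeas : ∀ m, (∀ i, m i ∈ M i) → Feasible q (ψ m)) :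
    VisiblyFair q M ψ ↔
      ∀ m, (∀ i, m i ∈ M i) → ∀ k : Fin n, ∀ z ∈ Z, ψ m k ∈ z →
        (ψ m k ∈ remStates q (ψ m) k ∧
          ∀ s ∈ remStates q (ψ m) k, s ∈ z → s ≠ ψ m k → m k (ψ m k) s) ∧
        (∀ rz : Set S → Set S → Prop, StrictOrderOn Z rz → RankedZonalMsg Z rz (m k) →
          (remStates q (ψ m) k ∩ z ≠ {s | ZoneMin (m k) z s}) ∨
          ¬ ∃ z' ∈ Z, rz z' z ∧ ∃ s, ZoneMax (m k) z' s ∧ s ∈ remStates q (ψ m) k) := by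
    classical
  constructor
  · intro hfair m hm k z hzZ hzk
    have hF := hfeas m hm
    have hAk : ψ m k ∈ remStates q (ψ m) k := lemA q hF k
    have hacyc := (hMmsg k (m k) (hm k)).2
    obtain ⟨rz0, hord0, hrzm0⟩ := (hMz k).1 (m k) (hm k)
    have hbeat : ∀ s ∈ remStates q (ψ m) k, s ∈ z → s ≠ ψ m k → m k (ψ m k) s := by
      intro s hs hsz hsne
      rcases hrzm0.1 z hzZ (ψ m k) hzk s hsz (Ne.symm hsne) with h | h
      · exact h
      · exact absurd (lemB q m hF hs hsne h) (hfair m hm)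
    refine ⟨⟨hAk, hbeat⟩, ?_⟩
    intro rz hord hrzm
    by_contra hcon
    push_neg at hcon
    obtain ⟨heq, z', hz'Z, hrzz, s, hmax, hsrem⟩ := hcon
    have hmin : ZoneMin (m k) z (ψ m k) := by
      have hmem : ψ m k ∈ remStates q (ψ m) k ∩ z := ⟨hAk, hzk⟩
      rw [heq] at hmem
      exact hmem
    have hz'ne : z' ≠ z := by
      intro e; subst e; exact hord.1 z' hz'Z hrzz
    have hsne : s ≠ ψ m k := by
      intro e
      obtain ⟨w, _, huniq⟩ := hZ.2 s
      exact hz'ne ((huniq z' ⟨hz'Z, hmax.1⟩).trans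
        (huniq z ⟨hzZ, by rw [e]; exact hzk⟩).symm)
    have hmks : m k s (ψ m k) :=
      (hrzm.2.2 z' hz'Z z hzZ hz'ne s hmax.1 (ψ m k) hzk).mpr ⟨hrzz, hmax, hmin⟩
    exact absurd (lemB q m hF hsrem hsne hmks) (hfair m hm)
  · intro hrhs m hm hunfair
    have hF := hfeas m hm
    obtain ⟨k, s, hsrem, hsne, hmks⟩ := lemC q m hF hunfair
    obtain ⟨z, ⟨hzZ, hzk⟩, huniq⟩ := hZ.2 (ψ m k)
    obtain ⟨⟨hAk, hbeat⟩, h2⟩ := hrhs m hm k z hzZ hzk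
    have hacyc := (hMmsg k (m k) (hm k)).2
    obtain ⟨rz, hord, hrzm⟩ := (hMz k).1 (m k) (hm k)
    by_cases hsz : s ∈ z
    · exact cycFalse hacyc hmks (hbeat s hsrem hsz hsne)
    · obtain ⟨z', ⟨hz'Z, hsz'⟩, _⟩ := hZ.2 s
      have hz'ne : z' ≠ z := fun e => hsz (e ▸ hsz')
      obtain ⟨hrzz, hmax, hmin⟩ :=
        (hrzm.2.2 z' hz'Z z hzZ hz'ne s hsz' (ψ m k) hzk).mp hmks
      rcases h2 rz hord hrzm with hne | hno
      · apply hne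
        ext t
        constructor
        · rintro ⟨htrem, htz⟩
          by_cases ht : t = ψ m k
          · rw [ht]; exact hmin
          · exact absurd (hmin.2 t htz ht) (fun h' =>
              cycFalse hacyc h' (hbeat t htrem htz ht))
        · intro htmin
          have ht : t = ψ m k := by
            by_contra hne'
            exact cycFalse hacyc (htmin.2 (ψ m k) hzk (Ne.symm hne'))
              (hmin.2 t htmin.1 hne')
          rw [ht]; exact ⟨hAk, hzk⟩
      · exact hno ⟨z', hz'Z, hrzz, s, hmax, hsrem⟩
end

section
/- If a visibly fair mechanism ψ satisfies expressiveness and weak availability, then ψ is strategy-proof. -/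
attribute [local instance] Classical.propDecidable

/-- a visibly fair mechanism satisfying expressiveness and weak
availability is strategy-proof. -/
theorem stmt4 {S : Type*} [Fintype S] {n : ℕ}
    (q : S → ℕ) (hq : n ≤ ∑ s, q s)
    (M : Fin n → Set (S → S → Prop))
    (hMne : ∀ i, (M i).Nonempty)
    (hMmsg : ∀ i, ∀ r ∈ M i, IsMessage r)
    (ψ : (Fin n → S → S → Prop) → Fin n → S)
    (hfeas : ∀ m, (∀ i, m i ∈ M i) → Feasible q (ψ m))
    (hfair : VisiblyFair q M ψ)
    (hexp : Expressive M ψ)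
    (hwav : WeakAvailability q M ψ) :
    StrategyProof M ψ := by
  intro i p hp m hm htr mh hmh
  set a := ψ m with ha
  set b := ψ (Function.update m i mh) with hb
  by_cases heq : b i = a i
  · exact Or.inr heq.symm
  rcases hp.2.2 _ _ (fun h => heq (h.symm)) with hpab | hpba
  · exact Or.inl hpab
  -- p (b i) (a i): derive contradiction
  exfalso
  have hav : AvailState q a i (b i) := hwav i p hp m hm htr mh hmh (Or.inl hpba)
  have hcmp := hexp i m hm mh hmh
  have hmba : m i (b i) (a i) := by
    rcases hcmp with h | h | h
    · exact absurd h heq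
    · exact h
    · exact absurd hpba (hp.1 _ _ (htr _ _ h))
  apply hfair m hm
  refine ⟨i, ?_⟩
  by_cases hfull : (Finset.univ.filter fun j => a j = b i).card < q (b i)
  · exact Or.inr ⟨b i, fun h => heq h.symm, hfull, hmba⟩
  · push_neg at hfull
    left
    have hsub : (Finset.univ.filter fun j => a j = b i ∧ j < i) ⊆
        (Finset.univ.filter fun j => a j = b i) := by
      intro x hx
      simp only [Finset.mem_filter] at *
      exact ⟨hx.1, hx.2.1⟩
    have hlt : (Finset.univ.filter fun j => a j = b i ∧ j < i).card <
        (Finset.univ.filter fun j => a j = b i).card := lt_of_lt_of_le hav hfull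
    have hns : ¬ (Finset.univ.filter fun j => a j = b i) ⊆
        (Finset.univ.filter fun j => a j = b i ∧ j < i) :=
      fun h => absurd (Finset.card_le_card h) (not_le.2 hlt)
    obtain ⟨j, hj1, hj2⟩ := Finset.not_subset.1 hns
    simp only [Finset.mem_filter, Finset.mem_univ, true_and] at hj1 hj2
    have hji : ¬ j < i := fun h => hj2 ⟨hj1, h⟩
    have hij : i < j := by
      rcases lt_trichotomy i j with h | h | h
      · exact h
      · subst h; exact absurd hj1.symm heq
      · exact absurd h hji
    refine ⟨j, ?_, hij, ?_⟩
    · show a i ≠ a j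
      rw [hj1]; exact fun h => heq h.symm
    · show m i (a j) (a i)
      rw [hj1]; exact hmba
end

section
/- If a visibly fair mechanism ψ satisfies expressiveness and availability, then ψ is strategy-proof. -/
attribute [local instance] Classical.propDecidable

/-- a visibly fair mechanism satisfying expressiveness and availability is
strategy-proof. -/
theorem stmt6 {S : Type*} [Fintype S] {n : ℕ}
    (q : S → ℕ) (hq : n ≤ ∑ s, q s)
    (M : Fin n → Set (S → S → Prop))
    (hMne : ∀ i, (M i).Nonempty)
    (hMmsg : ∀ i, ∀ r ∈ M i, IsMessage r)
    (ψ : (Fin n → S → S → Prop) → Fin n → S)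
    (hfeas : ∀ m, (∀ i, m i ∈ M i) → Feasible q (ψ m))
    (hfair : VisiblyFair q M ψ)
    (hexp : Expressive M ψ)
    (hav : Availability q M ψ) :
    StrategyProof M ψ := by
  intro i p hp m hm htr mh hmh
  set a := ψ m with ha
  set a' := ψ (Function.update m i mh) with ha'
  by_cases heq : a i = a' i
  · exact Or.inr heq
  rcases hexp i m hm mh hmh with h | h | h
  · exact Or.inr h.symm
  swap
  · exact Or.inl (htr _ _ h)
  -- h : m i (a' i) (a i); derive visible unfairness contradiction
  exfalso
  apply hfair m hm
  have hav' := hav i m hm mh hmh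
  unfold AvailState at hav'
  by_cases hfull : (Finset.univ.filter fun j => a j = a' i).card < q (a' i)
  · exact ⟨i, Or.inr ⟨a' i, heq, hfull, h⟩⟩
  · push_neg at hfull
    have hsub : (Finset.univ.filter fun j => a j = a' i ∧ j < i) ⊆
        (Finset.univ.filter fun j => a j = a' i) := by
      intro j hj
      simp only [Finset.mem_filter] at hj ⊢
      exact ⟨hj.1, hj.2.1⟩
    have hlt : (Finset.univ.filter fun j => a j = a' i ∧ j < i).card <
        (Finset.univ.filter fun j => a j = a' i).card := lt_of_lt_of_le hav' hfull
    have hex : ∃ j : Fin n, a j = a' i ∧ ¬ j < i := by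
      by_contra hc
      push_neg at hc
      have : (Finset.univ.filter fun j => a j = a' i ∧ j < i) =
          (Finset.univ.filter fun j => a j = a' i) := by
        apply Finset.filter_congr
        intro j _
        simp only [and_iff_left_iff_imp, iff_self_and]
        exact hc j
      rw [this] at hlt
      exact lt_irrefl _ hlt
    obtain ⟨j, hj1, hji⟩ := hex
    have hij : i < j := by
      rcases lt_or_eq_of_le (not_lt.mp hji) with h' | h'
      · exact h'
      · exact absurd (h' ▸ hj1) heq
    refine ⟨i, Or.inl ⟨j, ?_, hij, ?_⟩⟩
    · show a i ≠ a j
      rw [hj1]; exact heq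
    · show m i (a j) (a i)
      rw [hj1]; exact h
end

section
/- There exist a problem, zonal message spaces, and a visibly fair mechanism over them (hence a partitioned priority mechanism) that is not strategy-proof. Concretely: in the problem with three officers I = {i_1, i_2, i_3} (in decreasing priority), three states S = {s_1, s_2, s_3} each of capacity 1, and every officer having the zonal message space with zones z_1 = {s_1, s_2} and z_2 = {s_3}, there exists a visibly fair mechanism ψ under which some officer with true strict preference s_1 ≻ s_2 ≻ s_3 obtains a strictly ≻-preferred state by reporting the within-zone order s_2 ≻ s_1 instead of the truthful within-zone order s_1 ≻ s_2. -/
attribute [local instance] Classical.propDecidable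

/-- Zones `z₁ = {s₁, s₂}` and `z₂ = {s₃}` (states `s₁ = 0`, `s₂ = 1`, `s₃ = 2`). -/
def Zex9 : Set (Set (Fin 3)) := {{0, 1}, {2}}

/-- The true preference `s₁ ≻ s₂ ≻ s₃`, i.e. numerically smaller states preferred. -/
def prefEx9 : Fin 3 → Fin 3 → Prop := fun s s' => s < s'


/-!
Each officer reports either `s₁ ≻ s₂` or `s₂ ≻ s₁`, and `s₃` is comparable to nothing. Officer `i₁`
gets `s₂` if she reports `s₂ ≻ s₁` and `s₃` otherwise; `i₂` gets her reported favourite among the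
states of `z₁` still free, and `i₃` the last state. Every state is filled, and no officer's report
ranks a lower-priority officer's state above her own, so the mechanism is visibly fair. Yet `i₁`,
with true preference `s₁ ≻ s₂ ≻ s₃`, gets `s₃` when truthful and `s₂` when she swaps `s₁, s₂`.
-/

variable {S : Type*}

def pairRel (a b : S) : S → S → Prop := fun s s' => s = a ∧ s' = b

theorem isMessage_pairRel {a b : S} (hab : a ≠ b) : IsMessage (pairRel a b) := by
  have htrans : Relation.TransGen (pairRel a b) = pairRel a b :=
    @Relation.transGen_eq_self _ _ ⟨fun {_ _ _} h₁ h₂ => absurd (h₁.2.symm.trans h₂.1) hab.symm⟩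
  refine ⟨fun s h => hab (h.1.symm.trans h.2), fun s h => ?_⟩
  rw [htrans] at h
  exact hab (h.1.symm.trans h.2)

theorem feasible_one_of_injective {n : ℕ} {a : Fin n → S} (ha : Function.Injective a) :
    Feasible (fun _ => 1) a := fun _ =>
  Finset.card_le_one.mpr fun _ hi _ hj =>
    ha ((Finset.mem_filter.mp hi).2.trans (Finset.mem_filter.mp hj).2.symm)

theorem visiblyUnfair_one_iff_of_surjective {n : ℕ} {m : Fin n → S → S → Prop}
    {a : Fin n → S} (ha : Function.Surjective a) :
    VisiblyUnfair (fun _ => 1) m a ↔ ∃ i j, a i ≠ a j ∧ i < j ∧ m i (a j) (a i) := by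
  have hfilled : ∀ s, ¬ (Finset.univ.filter fun j => a j = s).card < 1 := fun s hs => by
    obtain ⟨i, hi⟩ := ha s
    exact Finset.card_ne_zero_of_mem (Finset.mem_filter.mpr ⟨Finset.mem_univ i, hi⟩)
      (Nat.lt_one_iff.mp hs)
  simp only [VisiblyUnfair, hfilled, false_and, and_false, exists_false, or_false]

theorem sameZone_Zex9_iff (s s' : Fin 3) : SameZone Zex9 s s' ↔ (s = 2 ↔ s' = 2) := by
  simp only [SameZone, Zex9, Set.mem_insert_iff, Set.mem_singleton_iff, exists_eq_or_imp,
    exists_eq_left]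
  fin_cases s <;> fin_cases s' <;> decide

def zonalMessages : Set (Fin 3 → Fin 3 → Prop) := {pairRel 0 1, pairRel 1 0}

theorem isMessage_of_mem_zonalMessages {r : Fin 3 → Fin 3 → Prop} (hr : r ∈ zonalMessages) :
    IsMessage r := by
  rcases hr with rfl | rfl <;> exact isMessage_pairRel (by decide)

theorem zonalSpace_zonalMessages : ZonalSpace Zex9 zonalMessages := by
  refine ⟨fun r hr s s' => ?_, ?_⟩
  · rw [sameZone_Zex9_iff]
    rcases hr with rfl | rfl <;> fin_cases s <;> fin_cases s' <;> simp [Cmp, pairRel]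
  · rintro R ⟨hasymm, -, htotal⟩
    have hzone : ∀ z ∈ Zex9, ∀ s ∈ z, ∀ s' ∈ z, s ≠ s' → s = 0 ∧ s' = 1 ∨ s = 1 ∧ s' = 0 := by
      simp only [Zex9, Set.mem_insert_iff, Set.mem_singleton_iff]
      rintro z (rfl | rfl) s hs s' hs' hne
      · simp only [Set.mem_insert_iff, Set.mem_singleton_iff] at hs hs'
        omega
      · exact absurd (hs.trans hs'.symm) hne
    by_cases h01 : R 0 1
    · refine ⟨pairRel 0 1, .inl rfl, fun z hz s hs s' hs' hne => ?_⟩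
      rcases hzone z hz s hs s' hs' hne with ⟨rfl, rfl⟩ | ⟨rfl, rfl⟩
      · simpa [pairRel] using h01
      · simpa [pairRel] using hasymm _ _ h01
    · have h10 : R 1 0 := (htotal 0 1 (by decide)).resolve_left h01
      refine ⟨pairRel 1 0, .inr rfl, fun z hz s hs s' hs' hne => ?_⟩
      rcases hzone z hz s hs s' hs' hne with ⟨rfl, rfl⟩ | ⟨rfl, rfl⟩
      · simpa [pairRel] using h01
      · simpa [pairRel] using h10

noncomputable def exampleMechanism (m : Fin 3 → Fin 3 → Fin 3 → Prop) : Fin 3 → Fin 3 :=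
  if m 0 1 0 then ![1, 0, 2] else if m 1 1 0 then ![2, 1, 0] else ![2, 0, 1]

theorem exampleMechanism_bijective (m : Fin 3 → Fin 3 → Fin 3 → Prop) :
    Function.Bijective (exampleMechanism m) := by
  unfold exampleMechanism
  split_ifs <;> decide

theorem exampleMechanism_no_envy {m : Fin 3 → Fin 3 → Fin 3 → Prop}
    (hm : ∀ j, m j ∈ zonalMessages) {i j : Fin 3} (hij : i < j) :
    ¬ m i (exampleMechanism m j) (exampleMechanism m i) := by
  rcases hm 0 with h0 | h0 <;> rcases hm 1 with h1 | h1 <;>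
    fin_cases i <;> fin_cases j <;> simp_all [exampleMechanism, pairRel]

theorem visiblyFair_exampleMechanism :
    VisiblyFair (fun _ => 1) (fun _ => zonalMessages) exampleMechanism := fun m hm => by
  rw [visiblyUnfair_one_iff_of_surjective (exampleMechanism_bijective m).2]
  rintro ⟨i, j, -, hij, henvy⟩
  exact exampleMechanism_no_envy hm hij henvy

/-- there is a visibly fair mechanism on zonal message spaces (a
partitioned priority mechanism) that is not strategy-proof: some officer with true
preference `s₁ ≻ s₂ ≻ s₃` profits by reversing her within-zone report of `s₁, s₂`. -/
theorem stmt9 :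
    ∃ (M : Fin 3 → Set (Fin 3 → Fin 3 → Prop))
      (ψ : (Fin 3 → Fin 3 → Fin 3 → Prop) → Fin 3 → Fin 3),
      (∀ i, (M i).Nonempty) ∧
      (∀ i, ∀ r ∈ M i, IsMessage r) ∧
      (∀ i, ZonalSpace Zex9 (M i)) ∧
      (∀ m, (∀ j, m j ∈ M j) → Feasible (fun _ => 1) (ψ m)) ∧
      VisiblyFair (fun _ => 1) M ψ ∧
      ∃ (i : Fin 3) (m : Fin 3 → Fin 3 → Fin 3 → Prop) (mh : Fin 3 → Fin 3 → Prop),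
        (∀ j, m j ∈ M j) ∧ mh ∈ M i ∧
        Truthful prefEx9 (m i) ∧
        m i 0 1 ∧ mh 1 0 ∧
        prefEx9 (ψ (Function.update m i mh) i) (ψ m i) := by
  refine ⟨fun _ => zonalMessages, exampleMechanism, fun _ => ⟨pairRel 0 1, .inl rfl⟩,
    fun _ _ => isMessage_of_mem_zonalMessages, fun _ => zonalSpace_zonalMessages,
    fun m _ => feasible_one_of_injective (exampleMechanism_bijective m).1,
    visiblyFair_exampleMechanism, 0, fun _ => pairRel 0 1, pairRel 1 0,
    fun _ => .inl rfl, .inr rfl, ?_, ⟨rfl, rfl⟩, ⟨rfl, rfl⟩, ?_⟩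
  · rintro s s' ⟨rfl, rfl⟩
    exact Fin.zero_lt_one
  · simp [exampleMechanism, pairRel, prefEx9]
end

section
/- Assume the modular upper-bound system H satisfies sequential solvency, each officer i's message space is the modular-induced zonal message space for her type t_i, and each officer i is endowed with an arbitrary fixed strict order ▶_i over her zones. Then the Modular Priority Mechanism is well defined (every officer is assigned a state at her step), visibly fair, strategy-proof, and for every message profile its outcome respects H. -/
attribute [local instance] Classical.propDecidable

section Modular

variable {S T : Type*} {n : ℕ}

/-- A modular upper-bound: a set of types, a set of states and a ceiling. -/
structure UB (S T : Type*) where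
  types : Set T
  states : Set S
  cap : ℕ

/-- A modular upper-bound system: every set of covered types is nonempty. -/
def UBSystem (H : Set (UB S T)) : Prop := H.Finite ∧ ∀ h ∈ H, h.types.Nonempty

/-- An allocation respects the modular upper-bound system `H`. -/
def RespectsUB (H : Set (UB S T)) (t : Fin n → T) (a : Fin n → S) : Prop :=
  ∀ h ∈ H, (Finset.univ.filter fun i => a i ∈ h.states ∧ t i ∈ h.types).card ≤ h.cap

/-- The upper-bound signature `H^{s,t}` of a state for a type. -/
def ubSig (H : Set (UB S T)) (τ : T) (s : S) : Set (UB S T) :=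
  {h | h ∈ H ∧ s ∈ h.states ∧ τ ∈ h.types}

/-- The modular-induced zone of state `s` for type `τ`: all states with the same
signature. -/
def mzone (H : Set (UB S T)) (τ : T) (s : S) : Set S :=
  {s' | ubSig H τ s' = ubSig H τ s}

/-- The modular-induced zones for type `τ`. -/
def mzones (H : Set (UB S T)) (τ : T) : Set (Set S) :=
  {z | ∃ s, z = mzone H τ s}

/-- Number of officers ranked above `k` assigned to state `s`. -/
noncomputable def cntBefore (a : Fin n → S) (k : Fin n) (s : S) : ℕ :=
  (Finset.univ.filter fun j => j < k ∧ a j = s).card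

/-- Number of officers ranked above `k` counted by the upper-bound `h`. -/
noncomputable def cntBeforeUB (t : Fin n → T) (a : Fin n → S) (k : Fin n) (h : UB S T) : ℕ :=
  (Finset.univ.filter fun j => j < k ∧ a j ∈ h.states ∧ t j ∈ h.types).card

/-- Sequential solvency of the modular upper-bound system `H`. -/
def SeqSolvent (q : S → ℕ) (H : Set (UB S T)) (t : Fin n → T) : Prop :=
  ∀ (i : Fin n) (J : Finset (Fin n)) (b : Fin n → S), i ∉ J →
    (∀ s, (J.filter fun j => b j = s).card ≤ q s) →
    (∀ h ∈ H, (J.filter fun j => b j ∈ h.states ∧ t j ∈ h.types).card ≤ h.cap) →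
    ∃ s : S, (J.filter fun j => b j = s).card < q s ∧
      ∀ h ∈ H, s ∈ h.states → t i ∈ h.types →
        (J.filter fun j => b j ∈ h.states ∧ t j ∈ h.types).card < h.cap

/-- The modular-induced zonal message space: all messages that compare exactly the
states lying in a common zone of `Z`. -/
def zonalMsgs (Z : Set (Set S)) : Set (S → S → Prop) :=
  {r | IsMessage r ∧ ∀ s s',
      ((SameZone Z s s' ∧ s ≠ s') → (r s s' ∨ r s' s)) ∧
      (¬ SameZone Z s s' → ¬ r s s' ∧ ¬ r s' s)}

/-- Zone `z` is open for officer `k` given the assignment of higher-ranked officers: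
some state of `z` has spare capacity and no upper-bound covering `k`'s type and
meeting `z` is already binding. -/
def ZoneOpen (q : S → ℕ) (H : Set (UB S T)) (t : Fin n → T)
    (a : Fin n → S) (k : Fin n) (z : Set S) : Prop :=
  (∃ s ∈ z, cntBefore a k s < q s) ∧
  ∀ h ∈ H, t k ∈ h.types → (h.states ∩ z).Nonempty → cntBeforeUB t a k h < h.cap

/-- The outcome specification of the Modular Priority Mechanism: each officer is
assigned the message-greatest state with spare capacity in her exogenously first
open zone. -/
def MPMOutcome (q : S → ℕ) (H : Set (UB S T)) (t : Fin n → T)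
    (zo : Fin n → Set S → Set S → Prop)
    (m : Fin n → S → S → Prop) (a : Fin n → S) : Prop :=
  ∀ k : Fin n, ∃ z ∈ mzones H (t k),
    ZoneOpen q H t a k z ∧
    (∀ z' ∈ mzones H (t k), zo k z' z → ¬ ZoneOpen q H t a k z') ∧
    a k ∈ z ∧ cntBefore a k (a k) < q (a k) ∧
    ∀ s ∈ z, cntBefore a k s < q s → s ≠ a k → m k (a k) s

/-- Constrained Pareto efficiency with respect to the true preference profile `p`. -/
def ConstrainedPE (q : S → ℕ) (H : Set (UB S T)) (t : Fin n → T)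
    (p : Fin n → S → S → Prop) (a : Fin n → S) : Prop :=
  Feasible q a ∧ RespectsUB H t a ∧
  ¬ ∃ a' : Fin n → S, a' ≠ a ∧ Feasible q a' ∧ RespectsUB H t a' ∧
      ∀ i, p i (a' i) (a i) ∨ a' i = a i

end Modular

set_option linter.unusedSectionVars false

section Aux

lemma exists_min_rel' {α : Type*} (r : α → α → Prop) (F : Finset α) :
    (∀ x ∈ F, ¬ r x x) →
    (∀ x ∈ F, ∀ y ∈ F, ∀ z ∈ F, r x y → r y z → r x z) →
    F.Nonempty → ∃ x ∈ F, ∀ y ∈ F, ¬ r y x := by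
  induction F using Finset.strongInductionOn with
  | _ F ih =>
    intro hirr htr hne
    obtain ⟨x, hx⟩ := hne
    by_cases hmin : ∀ y ∈ F, ¬ r y x
    · exact ⟨x, hx, hmin⟩
    · push_neg at hmin
      obtain ⟨y, hy, hyx⟩ := hmin
      have hss : F.filter (fun w => r w x) ⊂ F :=
        Finset.filter_ssubset.2 ⟨x, hx, hirr x hx⟩
      obtain ⟨x', hx', hmin'⟩ := ih _ hss
        (fun w hw => hirr w (Finset.mem_filter.1 hw).1)
        (fun w hw y' hy' z hz => htr _ (Finset.mem_filter.1 hw).1 _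
          (Finset.mem_filter.1 hy').1 _ (Finset.mem_filter.1 hz).1)
        ⟨y, Finset.mem_filter.2 ⟨hy, hyx⟩⟩
      have hx'F := (Finset.mem_filter.1 hx').1
      have hx'x := (Finset.mem_filter.1 hx').2
      refine ⟨x', hx'F, fun w hw hwx' => ?_⟩
      exact hmin' w (Finset.mem_filter.2 ⟨hw, htr w hw x' hx'F x hx hwx' hx'x⟩) hwx'

lemma exists_max_acyclic' {α : Type*} (r : α → α → Prop)
    (hac : ∀ x, ¬ Relation.TransGen r x x) (F : Finset α) (hne : F.Nonempty) :
    ∃ x ∈ F, ∀ y ∈ F, ¬ r y x := by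
  obtain ⟨x, hx, hmin⟩ := exists_min_rel' (Relation.TransGen r) F
    (fun x _ => hac x) (fun a _ b _ c _ h1 h2 => h1.trans h2) hne
  exact ⟨x, hx, fun y hy hr => hmin y hy (Relation.TransGen.single hr)⟩

lemma card_filter_iff {α : Type*} [Fintype α] {p p' : α → Prop}
    [DecidablePred p] [DecidablePred p'] (h : ∀ j, p j ↔ p' j) :
    (Finset.univ.filter p).card = (Finset.univ.filter p').card := by
  refine congrArg Finset.card ?_
  ext j
  simp only [Finset.mem_filter, Finset.mem_univ, true_and, h j]

lemma card_filter_imp {α : Type*} [Fintype α] {p p' : α → Prop}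
    [DecidablePred p] [DecidablePred p'] (h : ∀ j, p j → p' j) :
    (Finset.univ.filter p).card ≤ (Finset.univ.filter p').card := by
  refine Finset.card_le_card fun j hj => ?_
  simp only [Finset.mem_filter, Finset.mem_univ, true_and] at *
  exact h j hj

lemma card_filter_insert' {α : Type*} [Fintype α] {p p' : α → Prop}
    [DecidablePred p] [DecidablePred p'] {k : α}
    (h : ∀ j, p' j ↔ p j ∨ j = k) (hk : ¬ p k) :
    (Finset.univ.filter p').card = (Finset.univ.filter p).card + 1 := by
  have he : Finset.univ.filter p' = insert k (Finset.univ.filter p) := by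
    ext j
    simp only [Finset.mem_filter, Finset.mem_univ, true_and, Finset.mem_insert, h j]
    tauto
  rw [he, Finset.card_insert_of_notMem (by
    simp only [Finset.mem_filter, Finset.mem_univ, true_and]
    exact hk)]

variable {S T : Type*} [Fintype S] {n : ℕ}

lemma zonal_isMessage {Z : Set (Set S)} {r : S → S → Prop}
    (h : r ∈ zonalMsgs Z) : IsMessage r := h.1

lemma zonal_prop {Z : Set (Set S)} {r : S → S → Prop} (h : r ∈ zonalMsgs Z) :
    ∀ s s', ((SameZone Z s s' ∧ s ≠ s') → (r s s' ∨ r s' s)) ∧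
      (¬ SameZone Z s s' → ¬ r s s' ∧ ¬ r s' s) := h.2

lemma mem_mzone_self (H : Set (UB S T)) (τ : T) (s : S) : s ∈ mzone H τ s := rfl

lemma zone_eq' {H : Set (UB S T)} {τ : T} {z : Set S} (hz : z ∈ mzones H τ) {s : S}
    (hs : s ∈ z) : z = mzone H τ s := by
  obtain ⟨s0, rfl⟩ := hz
  have hs' : ubSig H τ s = ubSig H τ s0 := hs
  ext s'
  exact ⟨fun h => h.trans hs'.symm, fun h => h.trans hs'⟩

/-- The per-step specification of the Modular Priority Mechanism. -/
def StepSpec (q : S → ℕ) (H : Set (UB S T)) (t : Fin n → T)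
    (zo : Fin n → Set S → Set S → Prop) (r : S → S → Prop)
    (a : Fin n → S) (k : Fin n) : Prop :=
  ∃ z ∈ mzones H (t k), ZoneOpen q H t a k z ∧
    (∀ z' ∈ mzones H (t k), zo k z' z → ¬ ZoneOpen q H t a k z') ∧
    a k ∈ z ∧ cntBefore a k (a k) < q (a k) ∧
    ∀ s ∈ z, cntBefore a k s < q s → s ≠ a k → r (a k) s

variable {q : S → ℕ} {H : Set (UB S T)} {t : Fin n → T}
  {zo : Fin n → Set S → Set S → Prop}

lemma cntBefore_congr' {a a' : Fin n → S} {k : Fin n}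
    (hag : ∀ j, j < k → a j = a' j) (s : S) :
    cntBefore a k s = cntBefore a' k s := by
  refine congrArg Finset.card (Finset.filter_congr fun j _ => ?_)
  exact ⟨fun h => ⟨h.1, by rw [← hag j h.1]; exact h.2⟩,
         fun h => ⟨h.1, by rw [hag j h.1]; exact h.2⟩⟩

lemma cntBeforeUB_congr' {a a' : Fin n → S} {k : Fin n}
    (hag : ∀ j, j < k → a j = a' j) (h : UB S T) :
    cntBeforeUB t a k h = cntBeforeUB t a' k h := by
  refine congrArg Finset.card (Finset.filter_congr fun j _ => ?_)
  exact ⟨fun hh => ⟨hh.1, by rw [← hag j hh.1]; exact hh.2.1, hh.2.2⟩,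
         fun hh => ⟨hh.1, by rw [hag j hh.1]; exact hh.2.1, hh.2.2⟩⟩

lemma zoneOpen_congr' {a a' : Fin n → S} {k : Fin n}
    (hag : ∀ j, j < k → a j = a' j) (z : Set S) :
    ZoneOpen q H t a k z ↔ ZoneOpen q H t a' k z := by
  unfold ZoneOpen
  simp only [cntBefore_congr' hag, cntBeforeUB_congr' hag]

lemma stepSpec_congr' {r : S → S → Prop} {a a' : Fin n → S} {k : Fin n}
    (hag : ∀ j, j ≤ k → a j = a' j)
    (h : StepSpec q H t zo r a k) : StepSpec q H t zo r a' k := by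
  have hag' : ∀ j, j < k → a j = a' j := fun j hj => hag j hj.le
  have hk : a k = a' k := hag k le_rfl
  obtain ⟨z, hz, ho, hmin, hmem, hcap, hmax⟩ := h
  refine ⟨z, hz, (zoneOpen_congr' hag' z).1 ho,
    fun z' hz' hzo' ho' => hmin z' hz' hzo' ((zoneOpen_congr' hag' z').2 ho'),
    hk ▸ hmem, ?_, ?_⟩
  · rw [← hk, ← cntBefore_congr' hag']; exact hcap
  · intro s hs hc hne
    rw [← hk]
    exact hmax s hs (by rw [cntBefore_congr' hag']; exact hc) (by rw [hk]; exact hne)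

lemma stepSpec_cross' {r r' : S → S → Prop} {a a' : Fin n → S} {k : Fin n}
    (hzo : StrictOrderOn (mzones H (t k)) (zo k))
    (hag : ∀ j, j < k → a j = a' j)
    (h1 : StepSpec q H t zo r a k) (h2 : StepSpec q H t zo r' a' k)
    (hne : a k ≠ a' k) : r (a k) (a' k) ∧ r' (a' k) (a k) := by
  obtain ⟨z, hz, ho, hmin, hmem, hcap, hmax⟩ := h1
  obtain ⟨z', hz', ho', hmin', hmem', hcap', hmax'⟩ := h2
  have hzz : z = z' := by
    by_contra hne'
    rcases hzo.2.2 z hz z' hz' hne' with h | h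
    · exact hmin' z hz h ((zoneOpen_congr' hag z).1 ho)
    · exact hmin z' hz' h ((zoneOpen_congr' hag z').2 ho')
  subst hzz
  constructor
  · exact hmax (a' k) hmem' (by rw [cntBefore_congr' hag]; exact hcap') (Ne.symm hne)
  · exact hmax' (a k) hmem (by rw [← cntBefore_congr' hag]; exact hcap) hne

lemma stepSpec_unique' {r : S → S → Prop} {a a' : Fin n → S} {k : Fin n}
    (hzo : StrictOrderOn (mzones H (t k)) (zo k)) (hr : IsMessage r)
    (hag : ∀ j, j < k → a j = a' j)
    (h1 : StepSpec q H t zo r a k) (h2 : StepSpec q H t zo r a' k) : a k = a' k := by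
  by_contra hne
  obtain ⟨hx, hy⟩ := stepSpec_cross' hzo hag h1 h2 hne
  exact hr.2 (a k) ((Relation.TransGen.single hx).trans (Relation.TransGen.single hy))

lemma partial_counts' {m : Fin n → S → S → Prop} {a : Fin n → S} :
    ∀ K : ℕ, (∀ k : Fin n, k.val < K → StepSpec q H t zo (m k) a k) →
      (∀ s, (Finset.univ.filter fun j : Fin n => j.val < K ∧ a j = s).card ≤ q s) ∧
      (∀ h ∈ H, (Finset.univ.filter
          fun j : Fin n => j.val < K ∧ a j ∈ h.states ∧ t j ∈ h.types).card ≤ h.cap) := by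
  intro K
  induction K with
  | zero =>
    intro _
    constructor
    · intro s; simp
    · intro h _; simp
  | succ K ih =>
    intro hspec
    have ih' := ih (fun k hk => hspec k (Nat.lt_succ_of_lt hk))
    by_cases hKn : K < n
    case neg =>
      have hiff : ∀ j : Fin n, j.val < K + 1 ↔ j.val < K := by
        intro j; have := j.isLt; omega
      constructor
      · intro s
        exact le_of_eq_of_le
          (card_filter_iff (fun j => and_congr_left fun _ => hiff j)) (ih'.1 s)
      · intro h hh
        exact le_of_eq_of_le
          (card_filter_iff (fun j => and_congr_left fun _ => hiff j)) (ih'.2 h hh)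
    case pos =>
      have hkv : (⟨K, hKn⟩ : Fin n).val = K := rfl
      set k : Fin n := ⟨K, hKn⟩ with hkdef
      obtain ⟨z, hz, ho, hmin, hmem, hcap, hmax⟩ := hspec k (Nat.lt_succ_self K)
      have cntEqU : ∀ s, cntBefore a k s
          = (Finset.univ.filter fun j : Fin n => j.val < K ∧ a j = s).card := by
        intro s
        unfold cntBefore
        exact card_filter_iff (fun j => and_congr_left fun _ => by rw [Fin.lt_def, hkv])
      have cntUBEqU : ∀ h : UB S T, cntBeforeUB t a k h
          = (Finset.univ.filter
            fun j : Fin n => j.val < K ∧ a j ∈ h.states ∧ t j ∈ h.types).card := by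
        intro h
        unfold cntBeforeUB
        exact card_filter_iff (fun j => and_congr_left fun _ => by rw [Fin.lt_def, hkv])
      constructor
      · intro s
        by_cases hPk : a k = s
        · have e := card_filter_insert' (p := fun j : Fin n => j.val < K ∧ a j = s)
            (p' := fun j : Fin n => j.val < K + 1 ∧ a j = s) (k := k)
            (fun j => by
              constructor
              · rintro ⟨h1, h2⟩
                rcases Nat.lt_succ_iff_lt_or_eq.1 h1 with h1 | h1
                · exact Or.inl ⟨h1, h2⟩
                · exact Or.inr (Fin.ext (by rw [h1, hkv]))
              · rintro (⟨h1, h2⟩ | rfl)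
                · exact ⟨Nat.lt_succ_of_lt h1, h2⟩
                · exact ⟨by rw [hkv]; omega, hPk⟩)
            (by rintro ⟨h1, _⟩; rw [hkv] at h1; omega)
          have hlt : (Finset.univ.filter
              fun j : Fin n => j.val < K ∧ a j = s).card < q s := by
            rw [← cntEqU s, ← hPk]; exact hcap
          omega
        · refine le_of_eq_of_le (card_filter_iff fun j => ?_) (ih'.1 s)
          constructor
          · rintro ⟨h1, h2⟩
            rcases Nat.lt_succ_iff_lt_or_eq.1 h1 with h1 | h1
            · exact ⟨h1, h2⟩
            · have hjk : j = k := Fin.ext (by rw [h1, hkv])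
              rw [hjk] at h2
              exact absurd h2 hPk
          · rintro ⟨h1, h2⟩
            exact ⟨Nat.lt_succ_of_lt h1, h2⟩
      · intro h hh
        by_cases hPk : a k ∈ h.states ∧ t k ∈ h.types
        · have e := card_filter_insert'
            (p := fun j : Fin n => j.val < K ∧ a j ∈ h.states ∧ t j ∈ h.types)
            (p' := fun j : Fin n => j.val < K + 1 ∧ a j ∈ h.states ∧ t j ∈ h.types)
            (k := k)
            (fun j => by
              constructor
              · rintro ⟨h1, h2⟩
                rcases Nat.lt_succ_iff_lt_or_eq.1 h1 with h1 | h1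
                · exact Or.inl ⟨h1, h2⟩
                · exact Or.inr (Fin.ext (by rw [h1, hkv]))
              · rintro (⟨h1, h2⟩ | rfl)
                · exact ⟨Nat.lt_succ_of_lt h1, h2⟩
                · exact ⟨by rw [hkv]; omega, hPk⟩)
            (by rintro ⟨h1, _⟩; rw [hkv] at h1; omega)
          have hlt' : cntBeforeUB t a k h < h.cap := ho.2 h hh hPk.2 ⟨a k, hPk.1, hmem⟩
          have e2 := cntUBEqU h
          omega
        · refine le_of_eq_of_le (card_filter_iff fun j => ?_) (ih'.2 h hh)
          constructor
          · rintro ⟨h1, h2⟩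
            rcases Nat.lt_succ_iff_lt_or_eq.1 h1 with h1 | h1
            · exact ⟨h1, h2⟩
            · have hjk : j = k := Fin.ext (by rw [h1, hkv])
              rw [hjk] at h2
              exact absurd h2 hPk
          · rintro ⟨h1, h2⟩
            exact ⟨Nat.lt_succ_of_lt h1, h2⟩

lemma exists_spec' [Nonempty S] (hsolv : SeqSolvent q H t)
    (hzo : ∀ i, StrictOrderOn (mzones H (t i)) (zo i))
    {m : Fin n → S → S → Prop} (hm : ∀ i, m i ∈ zonalMsgs (mzones H (t i))) :
    ∀ K : ℕ, ∃ a : Fin n → S, ∀ k : Fin n, k.val < K → StepSpec q H t zo (m k) a k := by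
  intro K
  induction K with
  | zero => exact ⟨fun _ => Classical.arbitrary S, fun k hk => absurd hk (by omega)⟩
  | succ K ih =>
    obtain ⟨a, ha⟩ := ih
    by_cases hKn : K < n
    swap
    · exact ⟨a, fun k hk => ha k (by have := k.isLt; omega)⟩
    have hkv : (⟨K, hKn⟩ : Fin n).val = K := rfl
    set k : Fin n := ⟨K, hKn⟩ with hkdef
    obtain ⟨hfeas, hub⟩ := partial_counts' K ha
    set J : Finset (Fin n) := Finset.univ.filter (fun j : Fin n => j.val < K) with hJ
    have hkJ : k ∉ J := by
      rw [hJ]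
      simp only [Finset.mem_filter, Finset.mem_univ, true_and, hkv]
      omega
    have eJ1 : ∀ s : S, (J.filter fun j => a j = s)
        = Finset.univ.filter fun j : Fin n => j.val < K ∧ a j = s := by
      intro s
      rw [hJ, Finset.filter_filter]
    have eJ2 : ∀ h : UB S T, (J.filter fun j => a j ∈ h.states ∧ t j ∈ h.types)
        = Finset.univ.filter fun j : Fin n =>
            j.val < K ∧ a j ∈ h.states ∧ t j ∈ h.types := by
      intro h
      rw [hJ, Finset.filter_filter]
    obtain ⟨s₀, hs₀cap, hs₀sig⟩ := hsolv k J a hkJ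
      (fun s => le_of_eq_of_le (congrArg Finset.card (eJ1 s)) (hfeas s))
      (fun h hh => le_of_eq_of_le (congrArg Finset.card (eJ2 h)) (hub h hh))
    have cntEqU : ∀ s, cntBefore a k s
        = (Finset.univ.filter fun j : Fin n => j.val < K ∧ a j = s).card := by
      intro s
      unfold cntBefore
      exact card_filter_iff (fun j => and_congr_left fun _ => by rw [Fin.lt_def, hkv])
    have cntUBEqU : ∀ h : UB S T, cntBeforeUB t a k h
        = (Finset.univ.filter fun j : Fin n =>
            j.val < K ∧ a j ∈ h.states ∧ t j ∈ h.types).card := by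
      intro h
      unfold cntBeforeUB
      exact card_filter_iff (fun j => and_congr_left fun _ => by rw [Fin.lt_def, hkv])
    have hz₀ : mzone H (t k) s₀ ∈ mzones H (t k) := ⟨s₀, rfl⟩
    have hopen₀ : ZoneOpen q H t a k (mzone H (t k) s₀) := by
      constructor
      · refine ⟨s₀, mem_mzone_self H (t k) s₀, ?_⟩
        have e := congrArg Finset.card (eJ1 s₀)
        rw [cntEqU]
        omega
      · intro h hh hth hne
        obtain ⟨s', hs'h, hs'z⟩ := hne
        have hsig : ubSig H (t k) s' = ubSig H (t k) s₀ := hs'z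
        have hmem' : h ∈ ubSig H (t k) s' := ⟨hh, hs'h, hth⟩
        rw [hsig] at hmem'
        have hlt := hs₀sig h hh hmem'.2.1 hth
        have e := congrArg Finset.card (eJ2 h)
        rw [cntUBEqU]
        omega
    set O : Finset (Set S) :=
      (Set.toFinite {z | z ∈ mzones H (t k) ∧ ZoneOpen q H t a k z}).toFinset with hO
    have hOmem : ∀ z : Set S, z ∈ O ↔ z ∈ mzones H (t k) ∧ ZoneOpen q H t a k z := by
      intro z; rw [hO, Set.Finite.mem_toFinset]; rfl
    have hOne : O.Nonempty := ⟨mzone H (t k) s₀, (hOmem _).2 ⟨hz₀, hopen₀⟩⟩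
    obtain ⟨zst, hzstO, hzstmin⟩ := exists_min_rel' (zo k) O
      (fun z hz => (hzo k).1 z ((hOmem z).1 hz).1)
      (fun z hz y hy w hw => (hzo k).2.1 z ((hOmem z).1 hz).1 y ((hOmem y).1 hy).1
        w ((hOmem w).1 hw).1) hOne
    have hzmz : zst ∈ mzones H (t k) := ((hOmem zst).1 hzstO).1
    have hopenst : ZoneOpen q H t a k zst := ((hOmem zst).1 hzstO).2
    set A : Finset S :=
      Finset.univ.filter (fun s => s ∈ zst ∧ cntBefore a k s < q s) with hA
    have hAne : A.Nonempty := by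
      obtain ⟨s, hs, hc⟩ := hopenst.1
      exact ⟨s, Finset.mem_filter.2 ⟨Finset.mem_univ s, hs, hc⟩⟩
    have hmsg := hm k
    obtain ⟨sst, hsstA, hsstmax⟩ :=
      exists_max_acyclic' (m k) (zonal_isMessage hmsg).2 A hAne
    have hsstz : sst ∈ zst := (Finset.mem_filter.1 hsstA).2.1
    have hsstcap : cntBefore a k sst < q sst := (Finset.mem_filter.1 hsstA).2.2
    have hgreat : ∀ s ∈ A, s ≠ sst → m k sst s := by
      intro s hsA hne
      have hsz : s ∈ zst := (Finset.mem_filter.1 hsA).2.1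
      have hsame : SameZone (mzones H (t k)) sst s := ⟨zst, hzmz, hsstz, hsz⟩
      rcases (zonal_prop hmsg sst s).1 ⟨hsame, Ne.symm hne⟩ with h | h
      · exact h
      · exact absurd h (hsstmax s hsA)
    refine ⟨Function.update a k sst, fun j hj => ?_⟩
    rcases Nat.lt_succ_iff_lt_or_eq.1 hj with hj | hj
    · refine stepSpec_congr' (fun l hl => ?_) (ha j hj)
      have hlk : l ≠ k := by
        intro hlk
        have hle : l.val ≤ j.val := hl
        rw [hlk, hkv] at hle
        omega
      rw [Function.update_of_ne hlk]
    · have hjk : j = k := Fin.ext (by rw [hj, hkv])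
      rw [hjk]
      have hag : ∀ l, l < k → a l = Function.update a k sst l :=
        fun l hl => (Function.update_of_ne (Fin.ne_of_lt hl) _ _).symm
      have ha'k : Function.update a k sst k = sst := Function.update_self k sst a
      refine ⟨zst, hzmz, (zoneOpen_congr' hag zst).1 hopenst, ?_, ?_, ?_, ?_⟩
      · intro z' hz' hzo' ho'
        exact hzstmin z' ((hOmem z').2 ⟨hz', (zoneOpen_congr' hag z').2 ho'⟩) hzo'
      · rw [ha'k]; exact hsstz
      · rw [ha'k, ← cntBefore_congr' hag]; exact hsstcap
      · intro s hs hc hne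
        rw [ha'k]
        refine hgreat s (Finset.mem_filter.2 ⟨Finset.mem_univ s, hs, ?_⟩) ?_
        · rw [cntBefore_congr' hag]; exact hc
        · rw [← ha'k]; exact hne

end Aux

/-- under sequential solvency, with modular-induced zonal message spaces
and arbitrary fixed strict orders over zones, the Modular Priority Mechanism is well
defined, visibly fair, strategy-proof, and its outcome always respects `H`. -/
theorem stmt10 {S T : Type*} [Fintype S] {n : ℕ}
    (q : S → ℕ) (hq : n ≤ ∑ s, q s)
    (t : Fin n → T) (H : Set (UB S T)) (hH : UBSystem H)
    (hsolv : SeqSolvent q H t)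
    (zo : Fin n → Set S → Set S → Prop)
    (hzo : ∀ i, StrictOrderOn (mzones H (t i)) (zo i))
    (M : Fin n → Set (S → S → Prop))
    (hM : ∀ i, M i = zonalMsgs (mzones H (t i))) :
    ∃ ψ : (Fin n → S → S → Prop) → Fin n → S,
      (∀ m, (∀ i, m i ∈ M i) → MPMOutcome q H t zo m (ψ m)) ∧
      (∀ m, (∀ i, m i ∈ M i) → Feasible q (ψ m)) ∧
      VisiblyFair q M ψ ∧
      StrategyProof M ψ ∧
      (∀ m, (∀ i, m i ∈ M i) → RespectsUB H t (ψ m)) := by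
  rcases Nat.eq_zero_or_pos n with hn | hn
  · subst hn
    refine ⟨fun _ k => k.elim0, fun m _ k => k.elim0, fun m _ s => by simp,
      fun m _ hVU => ?_, fun i => i.elim0, fun m _ h hh => by simp⟩
    obtain ⟨i, _⟩ := hVU
    exact i.elim0
  · haveI hS : Nonempty S := by
      by_contra hSe
      rw [not_nonempty_iff] at hSe
      rw [Finset.univ_eq_empty, Finset.sum_empty] at hq
      omega
    have hmz : ∀ m : Fin n → S → S → Prop, (∀ i, m i ∈ M i) →
        ∀ i, m i ∈ zonalMsgs (mzones H (t i)) := fun m hm i => (hM i) ▸ hm i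
    set ψ : (Fin n → S → S → Prop) → Fin n → S := fun m =>
      if h : ∃ a : Fin n → S, ∀ k : Fin n, StepSpec q H t zo (m k) a k then h.choose
      else fun _ => Classical.arbitrary S with hψdef
    have hψ : ∀ m : Fin n → S → S → Prop, (∀ i, m i ∈ M i) →
        ∀ k : Fin n, StepSpec q H t zo (m k) (ψ m) k := by
      intro m hm
      have hex : ∃ a : Fin n → S, ∀ k : Fin n, StepSpec q H t zo (m k) a k := by
        obtain ⟨a, ha⟩ := exists_spec' hsolv hzo (hmz m hm) n
        exact ⟨a, fun k => ha k k.isLt⟩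
      simp only [hψdef, dif_pos hex]
      exact hex.choose_spec
    refine ⟨ψ, ?_, ?_, ?_, ?_, ?_⟩
    · intro m hm
      exact hψ m hm
    · intro m hm s
      have h1 := (partial_counts' n (fun k _ => hψ m hm k)).1 s
      exact le_of_eq_of_le
        (card_filter_iff (fun j => ⟨fun hj => ⟨j.isLt, hj⟩, fun hj => hj.2⟩)) h1
    · -- visible fairness
      intro m hm hVU
      have hm' := hmz m hm
      have hspec := hψ m hm
      obtain ⟨i, hcase⟩ := hVU
      obtain ⟨z, hz, ho, hmin, hmem, hcap, hmax⟩ := hspec i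
      rcases hcase with ⟨j, hne, hij, hmji⟩ | ⟨s, hne, hcnt, hmsi⟩
      · have hsame : SameZone (mzones H (t i)) (ψ m j) (ψ m i) := by
          by_contra hns
          exact ((zonal_prop (hm' i) (ψ m j) (ψ m i)).2 hns).1 hmji
        obtain ⟨z', hz', hjz', hiz'⟩ := hsame
        have hz'eq : z' = mzone H (t i) (ψ m i) := zone_eq' hz' hiz'
        have hzeq : z = mzone H (t i) (ψ m i) := zone_eq' hz hmem
        have hjz : ψ m j ∈ z := by rw [hzeq, ← hz'eq]; exact hjz'
        obtain ⟨zj, _, _, _, _, hcapj, _⟩ := hspec j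
        have hav : cntBefore (ψ m) i (ψ m j) < q (ψ m j) := by
          have hle : cntBefore (ψ m) i (ψ m j) ≤ cntBefore (ψ m) j (ψ m j) := by
            unfold cntBefore
            refine Finset.card_le_card fun l hl => ?_
            simp only [Finset.mem_filter, Finset.mem_univ, true_and] at *
            exact ⟨hl.1.trans hij, hl.2⟩
          omega
        have hmij := hmax (ψ m j) hjz hav (Ne.symm hne)
        exact (zonal_isMessage (hm' i)).2 (ψ m i)
          ((Relation.TransGen.single hmij).trans (Relation.TransGen.single hmji))
      · have hsame : SameZone (mzones H (t i)) s (ψ m i) := by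
          by_contra hns
          exact ((zonal_prop (hm' i) s (ψ m i)).2 hns).1 hmsi
        obtain ⟨z', hz', hsz', hiz'⟩ := hsame
        have hz'eq : z' = mzone H (t i) (ψ m i) := zone_eq' hz' hiz'
        have hzeq : z = mzone H (t i) (ψ m i) := zone_eq' hz hmem
        have hsz : s ∈ z := by rw [hzeq, ← hz'eq]; exact hsz'
        have hav : cntBefore (ψ m) i s < q s := by
          have hle : cntBefore (ψ m) i s
              ≤ (Finset.univ.filter fun j => ψ m j = s).card := by
            unfold cntBefore
            refine Finset.card_le_card fun l hl => ?_
            simp only [Finset.mem_filter, Finset.mem_univ, true_and] at *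
            exact hl.2
          omega
        have hmis := hmax s hsz hav (Ne.symm hne)
        exact (zonal_isMessage (hm' i)).2 (ψ m i)
          ((Relation.TransGen.single hmis).trans (Relation.TransGen.single hmsi))
    · -- strategy-proofness
      intro i p hp m hm htr mh hmh
      have hm2 : ∀ j, Function.update m i mh j ∈ M j := by
        intro j
        by_cases hji : j = i
        · subst hji; rw [Function.update_self]; exact hmh
        · rw [Function.update_of_ne hji]; exact hm j
      have ha := hψ m hm
      have ha' := hψ (Function.update m i mh) hm2
      have hagree : ∀ N : ℕ, ∀ j : Fin n, j.val < N → j < i →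
          ψ m j = ψ (Function.update m i mh) j := by
        intro N
        induction N with
        | zero => intro j hj _; omega
        | succ N ihN =>
          intro j hj hji
          have hag : ∀ l, l < j → ψ m l = ψ (Function.update m i mh) l := by
            intro l hl
            have hlj : l.val < j.val := hl
            exact ihN l (by omega) (hl.trans hji)
          have hmj : Function.update m i mh j = m j :=
            Function.update_of_ne (Fin.ne_of_lt hji) mh m
          have h2 := ha' j
          rw [hmj] at h2
          exact stepSpec_unique' (hzo j) (zonal_isMessage (hmz m hm j)) hag (ha j) h2
      by_cases heq : ψ m i = ψ (Function.update m i mh) i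
      · exact Or.inr heq
      · have hag : ∀ l, l < i → ψ m l = ψ (Function.update m i mh) l :=
          fun l hl => hagree n l l.isLt hl
        exact Or.inl (htr _ _ (stepSpec_cross' (hzo i) hag (ha i) (ha' i) heq).1)
    · intro m hm h hh
      have h1 := (partial_counts' n (fun k _ => hψ m hm k)).2 h hh
      exact le_of_eq_of_le
        (card_filter_iff (fun j => ⟨fun hj => ⟨j.isLt, hj⟩, fun hj => hj.2⟩)) h1
end

section
/- Consider the problem with officers I = {i_1, i_2, i_3} (in decreasing priority), states S = {s_1, s_2} with q_{s_1} = q_{s_2} = 2, a single type (t_i = t for every officer i), and the modular upper-bound system H = {({t}, {s_1}, 1)}. There is no choice of message spaces (M_i)_{i∈I} satisfying richness together with a mechanism ψ such that ψ is visibly fair and, for every strict preference profile (≻_i)_{i∈I} and every message profile m with each m_i truthful for ≻_i, the outcome ψ(m) is constrained Pareto efficient with respect to (≻_i)_{i∈I} (in particular, respects H). -/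
attribute [local instance] Classical.propDecidable

/-- Richness of a message space. -/
def Rich {S : Type*} (M : Set (S → S → Prop)) : Prop :=
  ∀ r ∈ M, ∀ s s' : S, r s s' → (¬ ∃ y, r s y ∧ r y s') →
    ∃ r' ∈ M,
      (∀ a b : S, ¬ ((a = s ∧ b = s') ∨ (a = s' ∧ b = s)) → (r a b ↔ r' a b)) ∧
      r' s' s

/-- The single modular upper-bound: at most one officer (all of the single type) may be
assigned to state `s₁ = 0`. -/
def Hex11 : Set (UB (Fin 2) Unit) := {⟨Set.univ, {0}, 1⟩}

section Aux11

/-- The preference `0 ≻ 1` on `Fin 2`. -/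
def P01 : Fin 2 → Fin 2 → Prop := fun s s' => s = 0 ∧ s' = 1

/-- The preference `1 ≻ 0` on `Fin 2`. -/
def P10 : Fin 2 → Fin 2 → Prop := fun s s' => s = 1 ∧ s' = 0

lemma isSP_P01 : IsStrictPref P01 := by
  unfold IsStrictPref P01
  refine ⟨?_, ?_, ?_⟩ <;> intros <;> omega

lemma isSP_P10 : IsStrictPref P10 := by
  unfold IsStrictPref P10
  refine ⟨?_, ?_, ?_⟩ <;> intros <;> omega

lemma fin2cases (s : Fin 2) : s = 0 ∨ s = 1 := by omega

lemma msg_not_both {r : Fin 2 → Fin 2 → Prop} (h : IsMessage r) (h01 : r 0 1) : ¬ r 1 0 :=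
  fun h10 => h.2 0 ((Relation.TransGen.single h01).tail h10)

lemma truthful_of_n10 {r : Fin 2 → Fin 2 → Prop} (him : IsMessage r) (h10 : ¬ r 1 0) :
    Truthful P01 r := by
  intro s s' hss'
  rcases fin2cases s with rfl | rfl <;> rcases fin2cases s' with rfl | rfl
  · exact absurd hss' (him.1 0)
  · exact ⟨rfl, rfl⟩
  · exact absurd hss' h10
  · exact absurd hss' (him.1 1)

lemma truthful_of_n01 {r : Fin 2 → Fin 2 → Prop} (him : IsMessage r) (h01 : ¬ r 0 1) :
    Truthful P10 r := by
  intro s s' hss'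
  rcases fin2cases s with rfl | rfl <;> rcases fin2cases s' with rfl | rfl
  · exact absurd hss' (him.1 0)
  · exact absurd hss' h01
  · exact ⟨rfl, rfl⟩
  · exact absurd hss' (him.1 1)

lemma truthful_empty {p r : Fin 2 → Fin 2 → Prop} (him : IsMessage r)
    (h01 : ¬ r 0 1) (h10 : ¬ r 1 0) : Truthful p r := by
  intro s s' hss'
  rcases fin2cases s with rfl | rfl <;> rcases fin2cases s' with rfl | rfl
  · exact absurd hss' (him.1 0)
  · exact absurd hss' h01
  · exact absurd hss' h10
  · exact absurd hss' (him.1 1)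

/-- Richness flip on two states. -/
lemma flip_msg {M : Set (Fin 2 → Fin 2 → Prop)} (hM : ∀ r ∈ M, IsMessage r)
    (hR : Rich M) {r : Fin 2 → Fin 2 → Prop} (hr : r ∈ M) {s s' : Fin 2} (hss : r s s') :
    ∃ r' ∈ M, r' s' s := by
  have him := hM r hr
  have hss' : s ≠ s' := fun h => him.1 s (h ▸ hss)
  have hni : ¬ ∃ y, r s y ∧ r y s' := by
    rintro ⟨y, hy1, hy2⟩
    have : y = s ∨ y = s' := by omega
    rcases this with rfl | rfl
    · exact him.1 y hy1
    · exact him.1 y hy2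
  obtain ⟨r', hr', _, h⟩ := hR r hr s s' hss hni
  exact ⟨r', hr', h⟩

lemma card_filter_eq3 {P : Fin 3 → Prop} (inst : DecidablePred P) :
    (@Finset.filter _ P inst Finset.univ).card =
      (@ite _ (P 0) (inst 0) 1 0) + ((@ite _ (P 1) (inst 1) 1 0) + (@ite _ (P 2) (inst 2) 1 0)) := by
  rw [Finset.card_filter, Fin.sum_univ_three]; ring

lemma fcard_inst {P : Fin 3 → Prop} (i1 i2 : DecidablePred P) :
    (@Finset.filter _ P i1 Finset.univ).card = (@Finset.filter _ P i2 Finset.univ).card := by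
  have h : i1 = i2 := funext fun a => Subsingleton.elim _ _
  rw [h]

lemma ub_card {a : Fin 3 → Fin 2} (hub : RespectsUB Hex11 (fun _ => ()) a) :
    (Finset.univ.filter fun i => a i = 0).card ≤ 1 := by
  have h := hub ⟨Set.univ, {0}, 1⟩ (by simp [Hex11])
  simpa using h

lemma ub_of_card {a : Fin 3 → Fin 2}
    (h : (Finset.univ.filter fun i => a i = 0).card ≤ 1) :
    RespectsUB Hex11 (fun _ => ()) a := by
  intro hh hmem
  simp only [Hex11, Set.mem_singleton_iff] at hmem
  subst hmem
  simpa using h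

lemma two_le_card {a : Fin 3 → Fin 2} {x y : Fin 3} (hxy : x ≠ y)
    (hx : a x = 0) (hy : a y = 0) :
    2 ≤ (Finset.univ.filter fun i => a i = 0).card := by
  have hsub : ({x, y} : Finset (Fin 3)) ⊆ Finset.univ.filter fun i => a i = 0 := by
    intro z hz
    simp only [Finset.mem_insert, Finset.mem_singleton] at hz
    rcases hz with rfl | rfl <;> simp [hx, hy]
  calc 2 = ({x, y} : Finset (Fin 3)).card := by
        rw [Finset.card_insert_of_notMem (by simpa using hxy), Finset.card_singleton]
    _ ≤ _ := Finset.card_le_card hsub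

/-- Feasibility plus the upper bound force exactly one officer at state 0. -/
lemma exists_zero {a : Fin 3 → Fin 2} (hf : Feasible (fun _ => 2) a)
    (hub : RespectsUB Hex11 (fun _ => ()) a) :
    ∃ x, a x = 0 ∧ ∀ y, y ≠ x → a y = 1 := by
  have h1 := hf 1
  have h0 := ub_card hub
  by_cases hex : ∃ x, a x = 0
  · obtain ⟨x, hx⟩ := hex
    refine ⟨x, hx, fun y hy => ?_⟩
    by_contra hy1
    have hy0 : a y = 0 := by omega
    have := two_le_card (fun h : x = y => hy h.symm) hx hy0
    omega
  · push_neg at hex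
    have hall : ∀ i, a i = 1 := fun i => by have := hex i; omega
    rw [card_filter_eq3] at h1
    simp [hall] at h1

/-- Swapping a `0`-officer preferring 1 with a `1`-officer preferring 0 blocks
constrained Pareto efficiency. -/
lemma swap_dom {p : Fin 3 → Fin 2 → Fin 2 → Prop} {a : Fin 3 → Fin 2} {w z : Fin 3}
    (hwz : w ≠ z) (haw : a w = 0) (honly : ∀ y, y ≠ w → a y = 1)
    (hpw : p w 1 0) (hpz : p z 0 1) :
    ¬ ConstrainedPE (fun _ => 2) Hex11 (fun _ => ()) p a := by
  rintro ⟨hf, hub, hno⟩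
  apply hno
  refine ⟨fun i => if i = z then 0 else 1, ?_, ?_, ?_, ?_⟩
  · intro h
    have h' := congrFun h w
    simp only [if_neg hwz, haw] at h'
    exact absurd h' (by decide)
  · intro s
    rw [card_filter_eq3]
    rcases fin2cases s with rfl | rfl <;>
      rcases (show z = 0 ∨ z = 1 ∨ z = 2 by omega) with rfl | rfl | rfl <;>
      simp
  · apply ub_of_card
    rw [card_filter_eq3]
    rcases (show z = 0 ∨ z = 1 ∨ z = 2 by omega) with rfl | rfl | rfl <;> simp
  · intro i
    by_cases hiz : i = z
    · subst hiz
      left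
      simpa [honly i (fun h => hwz h.symm)] using hpz
    · by_cases hiw : i = w
      · subst hiw
        left
        simpa [hiz, haw] using hpw
      · right
        simp [hiz, honly i hiw]

end Aux11

/-- with three officers, two states of capacity two, a single type and the
upper-bound system `Hex11`, no mechanism on rich message spaces is both visibly fair and
constrained Pareto efficient at every truthful message profile. -/
theorem stmt11 :
    ¬ ∃ (M : Fin 3 → Set (Fin 2 → Fin 2 → Prop))
        (ψ : (Fin 3 → Fin 2 → Fin 2 → Prop) → Fin 3 → Fin 2),
      (∀ i, (M i).Nonempty) ∧
      (∀ i, ∀ r ∈ M i, IsMessage r) ∧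
      (∀ i, Rich (M i)) ∧
      (∀ m, (∀ j, m j ∈ M j) → Feasible (fun _ => 2) (ψ m)) ∧
      VisiblyFair (fun _ => 2) M ψ ∧
      (∀ p : Fin 3 → Fin 2 → Fin 2 → Prop, (∀ i, IsStrictPref (p i)) →
        ∀ m, (∀ j, m j ∈ M j) → (∀ i, Truthful (p i) (m i)) →
          ConstrainedPE (fun _ => 2) Hex11 (fun _ => ()) p (ψ m)) := by
  rintro ⟨M, ψ, hne, hmsg, hrich, hfeas, hvf, hcpe⟩
  have hthird : ∀ w x : Fin 3, ∃ z : Fin 3, z ≠ w ∧ z ≠ x := by decide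
  -- If the outcome respects the upper bound, no officer assigned to 1 may report 0 ≻ 1.
  have hviol : ∀ (m : Fin 3 → Fin 2 → Fin 2 → Prop), (∀ j, m j ∈ M j) →
      RespectsUB Hex11 (fun _ => ()) (ψ m) →
      ∀ y : Fin 3, ψ m y = 1 → ¬ m y 0 1 := by
    intro m hm hub y hy h01
    refine hvf m hm ⟨y, Or.inr ⟨0, ?_, ?_, ?_⟩⟩
    · rw [hy]; decide
    · exact (fcard_inst _ _).trans_lt (Nat.lt_of_le_of_lt (ub_card hub) Nat.one_lt_two)
    · rw [hy]; exact h01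
  by_cases hall : ∀ i, ∃ r ∈ M i, r 0 1
  · -- every officer can report 0 ≻ 1: let them all do so
    choose m hm hm01 using hall
    have htr : ∀ i, Truthful P01 (m i) :=
      fun i => truthful_of_n10 (hmsg i _ (hm i)) (msg_not_both (hmsg i _ (hm i)) (hm01 i))
    have hc := hcpe (fun _ => P01) (fun _ => isSP_P01) m hm htr
    obtain ⟨x, hx, hoth⟩ := exists_zero hc.1 hc.2.1
    obtain ⟨y, -, hyx⟩ := hthird x x
    exact hviol m hm hc.2.1 y (hoth y hyx) (hm01 y)
  · -- some officer can only send empty messages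
    have hsel : ∀ j, ∃ r, r ∈ M j ∧ ((∃ r' ∈ M j, r' 0 1) → r 0 1) := by
      intro j
      by_cases h : ∃ r ∈ M j, r 0 1
      · obtain ⟨r, hr, h01⟩ := h
        exact ⟨r, hr, fun _ => h01⟩
      · obtain ⟨r, hr⟩ := hne j
        exact ⟨r, hr, fun hc => absurd hc h⟩
    choose m hm hm01 using hsel
    have hdich : ∀ j, m j 0 1 ∨ (¬ m j 0 1 ∧ ¬ m j 1 0) := by
      intro j
      by_cases h : ∃ r ∈ M j, r 0 1
      · exact Or.inl (hm01 j h)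
      · refine Or.inr ⟨fun h01 => h ⟨m j, hm j, h01⟩, fun h10 => ?_⟩
        obtain ⟨r', hr', h01⟩ := flip_msg (hmsg j) (hrich j) (hm j) h10
        exact h ⟨r', hr', h01⟩
    have htr : ∀ i, Truthful P01 (m i) := by
      intro i
      rcases hdich i with h | ⟨h01, h10⟩
      · exact truthful_of_n10 (hmsg i _ (hm i)) (msg_not_both (hmsg i _ (hm i)) h)
      · exact truthful_empty (hmsg i _ (hm i)) h01 h10
    have hc := hcpe (fun _ => P01) (fun _ => isSP_P01) m hm htr
    obtain ⟨x, hx, hoth⟩ := exists_zero hc.1 hc.2.1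
    -- every officer other than x sends an empty message
    have hempty : ∀ y, y ≠ x → ¬ m y 0 1 ∧ ¬ m y 1 0 := by
      intro y hy
      rcases hdich y with h | h
      · exact absurd h (hviol m hm hc.2.1 y (hoth y hy))
      · exact h
    rcases hdich x with hx01 | hxe
    · -- x's message compares the two states: flip it to 1 ≻ 0
      obtain ⟨r', hr'M, hr'10⟩ := flip_msg (hmsg x) (hrich x) (hm x) hx01
      have hr'01 : ¬ r' 0 1 := fun h => msg_not_both (hmsg x r' hr'M) h hr'10
      set m' : Fin 3 → Fin 2 → Fin 2 → Prop := fun j => if j = x then r' else m j with hm'def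
      have hm' : ∀ j, m' j ∈ M j := by
        intro j
        by_cases h : j = x <;> simp [hm'def, h, hr'M, hm j]
      have htr' : ∀ (q : Fin 3 → Fin 2 → Fin 2 → Prop),
          q x = P10 → ∀ i, Truthful (q i) (m' i) := by
        intro q hq i
        by_cases h : i = x
        · subst h
          rw [hq]
          simpa [hm'def] using truthful_of_n01 (hmsg i r' hr'M) hr'01
        · have he := hempty i h
          have : m' i = m i := by simp [hm'def, h]
          rw [this]
          exact truthful_empty (hmsg i _ (hm i)) he.1 he.2
      -- first run: determine who gets state 0 under m'
      have hp1sp : ∀ i, IsStrictPref ((fun j => if j = x then P10 else P01) i) := by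
        intro i
        by_cases h : i = x <;> simp [h, isSP_P10, isSP_P01]
      have hc1 := hcpe (fun j => if j = x then P10 else P01) hp1sp m' hm'
        (htr' _ (by simp))
      obtain ⟨w, hw, hoth'⟩ := exists_zero (hfeas m' hm') hc1.2.1
      obtain ⟨z, hzw, hzx⟩ := hthird w x
      -- second run: give both w and x the preference 1 ≻ 0, z the preference 0 ≻ 1
      set p2 : Fin 3 → Fin 2 → Fin 2 → Prop :=
        fun j => if j = w then P10 else if j = x then P10 else P01 with hp2def
      have hp2sp : ∀ i, IsStrictPref (p2 i) := by
        intro i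
        by_cases h : i = w <;> by_cases h' : i = x <;>
          simp [hp2def, h, h', isSP_P10, isSP_P01]
      have hp2x : p2 x = P10 := by
        by_cases h : x = w <;> simp [hp2def, h]
      have hc2 := hcpe p2 hp2sp m' hm' (htr' p2 hp2x)
      refine swap_dom (fun h => hzw h.symm) hw hoth' ?_ ?_ hc2
      · simp [hp2def, P10]
      · simp [hp2def, fun h : z = w => hzw h, fun h : z = x => hzx h, P01]
    · -- x's message is empty as well: all messages are empty
      obtain ⟨z, hzx, -⟩ := hthird x x
      set p2 : Fin 3 → Fin 2 → Fin 2 → Prop :=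
        fun j => if j = x then P10 else P01 with hp2def
      have hp2sp : ∀ i, IsStrictPref (p2 i) := by
        intro i
        by_cases h : i = x <;> simp [hp2def, h, isSP_P10, isSP_P01]
      have htr2 : ∀ i, Truthful (p2 i) (m i) := by
        intro i
        by_cases h : i = x
        · subst h
          exact truthful_empty (hmsg i _ (hm i)) hxe.1 hxe.2
        · have he := hempty i h
          exact truthful_empty (hmsg i _ (hm i)) he.1 he.2
      have hc2 := hcpe p2 hp2sp m hm htr2
      refine swap_dom (fun h => hzx h.symm) hx hoth ?_ ?_ hc2
      · simp [hp2def, P10]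
      · simp [hp2def, fun h : z = x => hzx h, P01]
end

section
/- For every message profile m, every feasible allocation that is not visibly unfair under m is visibly efficient under m. -/
attribute [local instance] Classical.propDecidable

/-- every feasible allocation that is not visibly unfair under `m` is
visibly efficient under `m`. -/
theorem stmt13 {S : Type*} [Fintype S] {n : ℕ}
    (q : S → ℕ) (hq : n ≤ ∑ s, q s)
    (m : Fin n → S → S → Prop) (hm : ∀ i, IsMessage (m i))
    (a : Fin n → S) (ha : Feasible q a)
    (hfair : ¬ VisiblyUnfair q m a) :
    VisEff q m a := by
  rintro ⟨a', hne, hfa, hdom⟩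
  apply hfair
  have hex : ∃ i, a' i ≠ a i := by
    by_contra h; push_neg at h; exact hne (funext h)
  obtain ⟨i0, hi0⟩ := hex
  obtain ⟨k, hkmem, hkmin⟩ := Finset.exists_min_image
    (Finset.univ.filter fun i => a' i ≠ a i) id (⟨i0, by simp [hi0]⟩)
  simp only [Finset.mem_filter, Finset.mem_univ, true_and] at hkmem
  set s := a' k with hs
  have hkns : a k ≠ s := fun h => hkmem h.symm
  by_cases hc : (Finset.univ.filter fun j => a j = s).card < q s
  · exact ⟨k, Or.inr ⟨s, hkns, hc, hdom k hkmem⟩⟩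
  · have hsub : ¬ ∀ j, a j = s → a' j = s := by
      intro hall
      have h1 : (Finset.univ.filter fun j => a j = s) ⊆
          (Finset.univ.filter fun j => a' j = s) := by
        intro j hj
        simp only [Finset.mem_filter, Finset.mem_univ, true_and] at hj ⊢
        exact hall j hj
      have hlt : (Finset.univ.filter fun j => a j = s).card <
          (Finset.univ.filter fun j => a' j = s).card := by
        apply Finset.card_lt_card
        refine ⟨h1, fun hsub2 => ?_⟩
        have hk2 : k ∈ Finset.univ.filter fun j => a' j = s := by simp [hs]
        have := hsub2 hk2
        simp only [Finset.mem_filter, Finset.mem_univ, true_and] at this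
        exact hkns this
      exact hc (lt_of_lt_of_le hlt (hfa s))
    push_neg at hsub
    obtain ⟨j, hj1, hj2⟩ := hsub
    have hjne : a' j ≠ a j := by rw [hj1]; exact hj2
    have hkj : k ≤ j := hkmin j (by simp [hjne])
    have hklt : k < j := lt_of_le_of_ne hkj (fun h => hj2 (h ▸ hs.symm))
    refine ⟨k, Or.inl ⟨j, ?_, hklt, ?_⟩⟩
    · rw [hj1]; exact hkns
    · rw [hj1]; exact hdom k hkmem
end
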